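/- arXiv:2605.18164 — 13 statements merged into one kernel-verified Lean document; each statement's English description precedes it below -/
import Mathlib

section
/- For every n ≥ 2, every locally admissible pattern P on the cube [1,n]^d extends to a globally admissible configuration on Z^d; moreover the extension can be chosen periodic with period 2(n−1) in each coordinate direction. Concretely, the configuration x : Z^d → Σ defined by x(v) = P(φ(v)), where φ(v) is obtained coordinatewise by reducing v_i modulo 2(n−1) into [0, 2n−3] and then reflecting values r ∈ [n, 2n−3] to 2n−2−r (finally shifting into [1,n]), is globally admissible and restricts to P on [1,n]^d. -/
/-- A pattern `P` on the cube `[1,n]^d` (coordinates encoded by `Fin n`, where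
`j : Fin n` represents the coordinate `j+1 ∈ [1,n]`) is locally admissible if no
two adjacent values form a forbidden pair. -/
def IsLocAdm {A : Type*} (d n : ℕ) (F : Fin d → Set (A × A))
    (P : (Fin d → Fin n) → A) : Prop :=
  ∀ (x : Fin d → Fin n) (k : Fin d) (h : (x k : ℕ) + 1 < n),
    (P x, P (Function.update x k ⟨(x k : ℕ) + 1, h⟩)) ∉ F k

/-- `patCount d F n` is `C_n`, the number of locally admissible patterns on `[1,n]^d`. -/
noncomputable def patCount {A : Type*} [Fintype A] (d : ℕ) (F : Fin d → Set (A × A))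
    (n : ℕ) : ℕ :=
  Nat.card {P : (Fin d → Fin n) → A // IsLocAdm d n F P}

/-- A configuration `x : ℤ^d → A` is globally admissible if no two adjacent values
form a forbidden pair. -/
def IsGlobAdm {A : Type*} (d : ℕ) (F : Fin d → Set (A × A))
    (x : (Fin d → ℤ) → A) : Prop :=
  ∀ (v : Fin d → ℤ) (k : Fin d),
    (x v, x (Function.update v k (v k + 1))) ∉ F k

/-- Coordinatewise folding map: reduce `v` modulo `2(n-1)` into `[0, 2n-3]`
(after shifting `[1,n]` to `[0,n-1]`) and reflect values `r ∈ [n, 2n-3]` to `2n-2-r`. -/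
def foldNat (n : ℕ) (v : ℤ) : ℕ :=
  if ((v - 1) % (2 * ((n : ℤ) - 1))).toNat < n then ((v - 1) % (2 * ((n : ℤ) - 1))).toNat
  else 2 * n - 2 - ((v - 1) % (2 * ((n : ℤ) - 1))).toNat

theorem foldNat_lt {n : ℕ} (hn : 2 ≤ n) (v : ℤ) : foldNat n v < n := by
  unfold foldNat
  have h1 : (0 : ℤ) < 2 * ((n : ℤ) - 1) := by
    have : (2 : ℤ) ≤ (n : ℤ) := by exact_mod_cast hn
    linarith
  have h2 := Int.emod_lt_of_pos (v - 1) h1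
  have h3 := Int.emod_nonneg (v - 1) (ne_of_gt h1)
  split <;> omega

theorem foldNat_succ {n : ℕ} (hn : 2 ≤ n) (v : ℤ) :
    foldNat n (v + 1) = foldNat n v + 1 ∨ foldNat n v = foldNat n (v + 1) + 1 := by
  unfold foldNat
  have hm : (0 : ℤ) < 2 * ((n : ℤ) - 1) := by
    have : (2 : ℤ) ≤ (n : ℤ) := by exact_mod_cast hn
    linarith
  set m : ℤ := 2 * ((n : ℤ) - 1) with hmdef
  have hr0 := Int.emod_nonneg (v - 1) (ne_of_gt hm)
  have hr1 := Int.emod_lt_of_pos (v - 1) hm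
  have key : (v + 1 - 1) % m = ((v - 1) % m + 1) % m := by
    rw [show v + 1 - 1 = (v - 1) + 1 by ring, Int.add_emod,
      show (1:ℤ) % m = 1 from Int.emod_eq_of_lt (by norm_num) (by linarith)]
  have hmn : m = 2 * (n : ℤ) - 2 := by rw [hmdef]; ring
  by_cases hc : (v - 1) % m + 1 < m
  · have : (v + 1 - 1) % m = (v - 1) % m + 1 := by
      rw [key, Int.emod_eq_of_lt (by linarith) hc]
    rw [this]
    split_ifs <;> omega
  · have hceq : (v - 1) % m = m - 1 := by omega
    have : (v + 1 - 1) % m = 0 := by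
      rw [key, hceq, show m - 1 + 1 = m by ring, Int.emod_self]
    rw [this, hceq]
    split_ifs <;> omega

theorem foldNat_period {n : ℕ} (hn : 2 ≤ n) (v : ℤ) :
    foldNat n (v + 2 * ((n : ℤ) - 1)) = foldNat n v := by
  unfold foldNat
  rw [show v + 2 * ((n:ℤ) - 1) - 1 = (v - 1) + 2 * ((n:ℤ)-1) * 1 by ring,
    Int.add_mul_emod_self_left]

theorem foldNat_id {n : ℕ} (hn : 2 ≤ n) (y : ℕ) (hy : y < n) :
    foldNat n ((y : ℤ) + 1) = y := by
  unfold foldNat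
  have : ((y : ℤ) + 1 - 1) % (2 * ((n : ℤ) - 1)) = (y : ℤ) := by
    rw [show (y:ℤ) + 1 - 1 = (y:ℤ) by ring]
    apply Int.emod_eq_of_lt (by positivity) (by push_cast; omega)
  rw [this]
  simp [hy]


theorem adj_notmem {A : Type*} {d n : ℕ} {F : Fin d → Set (A × A)}
    {P : (Fin d → Fin n) → A} (hP : IsLocAdm d n F P)
    (hF : ∀ (i : Fin d) (a b : A), (a, b) ∈ F i ↔ (b, a) ∈ F i)
    (f : Fin d → Fin n) (k : Fin d) (g : Fin n)
    (hadj : (g : ℕ) = (f k : ℕ) + 1 ∨ (f k : ℕ) = (g : ℕ) + 1) :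
    (P f, P (Function.update f k g)) ∉ F k := by
  rcases hadj with h | h
  · have h' : (f k : ℕ) + 1 < n := by have := g.isLt; omega
    have : g = ⟨(f k : ℕ) + 1, h'⟩ := Fin.ext h
    rw [this]
    exact hP f k h'
  · set f' := Function.update f k g with hf'
    have e1 : f' k = g := Function.update_self k g f
    have h' : (f' k : ℕ) + 1 < n := by rw [e1]; have := (f k).isLt; omega
    have h2 := hP f' k h'
    have e2 : Function.update f' k ⟨(f' k : ℕ) + 1, h'⟩ = f := by
      funext i
      by_cases hik : i = k
      · subst hik
        rw [Function.update_self]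
        refine Fin.ext ?_
        show (f' i : ℕ) + 1 = (f i : ℕ)
        have := congrArg Fin.val e1
        omega
      · rw [Function.update_of_ne hik, hf', Function.update_of_ne hik]
    rw [e2] at h2
    intro hmem
    exact h2 ((hF k _ _).mp hmem)

/-- every locally admissible pattern on `[1,n]^d` (`n ≥ 2`) extends, via the
explicit reflection-folding formula, to a globally admissible configuration on `ℤ^d`
which is periodic with period `2(n-1)` in each coordinate direction and restricts to `P`. -/
theorem locally_admissible_extends_periodically
    {A : Type*} [Fintype A] [Nonempty A]
    (d : ℕ) (hd : 1 ≤ d) (F : Fin d → Set (A × A))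
    (hF : ∀ (i : Fin d) (a b : A), (a, b) ∈ F i ↔ (b, a) ∈ F i)
    (n : ℕ) (hn : 2 ≤ n)
    (P : (Fin d → Fin n) → A) (hP : IsLocAdm d n F P) :
    IsGlobAdm d F (fun v => P (fun i => ⟨foldNat n (v i), foldNat_lt hn (v i)⟩)) ∧
    (∀ (v : Fin d → ℤ) (k : Fin d),
      P (fun i => ⟨foldNat n (Function.update v k (v k + 2 * ((n : ℤ) - 1)) i),
          foldNat_lt hn _⟩) =
      P (fun i => ⟨foldNat n (v i), foldNat_lt hn (v i)⟩)) ∧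
    (∀ y : Fin d → Fin n,
      P (fun i => ⟨foldNat n ((y i : ℤ) + 1), foldNat_lt hn _⟩) = P y) := by
  refine ⟨?_, ?_, ?_⟩
  · intro v k
    set f : Fin d → Fin n := fun i => ⟨foldNat n (v i), foldNat_lt hn (v i)⟩ with hf
    have hupd : (fun i => (⟨foldNat n (Function.update v k (v k + 1) i),
        foldNat_lt hn _⟩ : Fin n))
        = Function.update f k ⟨foldNat n (v k + 1), foldNat_lt hn _⟩ := by
      funext i
      by_cases h : i = k
      · subst h; simp
      · simp [Function.update_of_ne h, hf]
    show (P f, P (fun i => ⟨foldNat n (Function.update v k (v k + 1) i),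
        foldNat_lt hn _⟩)) ∉ F k
    rw [hupd]
    apply adj_notmem hP hF
    rcases foldNat_succ hn (v k) with h | h
    · exact Or.inl (by simp [hf, h])
    · exact Or.inr (by simp [hf, h])
  · intro v k
    congr 1
    funext i
    by_cases h : i = k
    · subst h
      exact Fin.ext (by simp [foldNat_period hn])
    · simp [Function.update_of_ne h]
  · intro y
    congr 1
    funext i
    exact Fin.ext (foldNat_id hn (y i) (y i).isLt)
end

section
/- For every n ≥ 2, a pattern on [1,n]^d is the restriction of some globally admissible configuration on Z^d if and only if it is locally admissible. In particular, the number of globally admissible patterns on [1,n]^d equals C_n. -/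
/-- zigzag fold of ℤ onto [0, n-1] with period 2n-2. -/
def zig (n : ℕ) (w : ℤ) : ℤ :=
  if w % (2*(n:ℤ)-2) < n then w % (2*(n:ℤ)-2) else 2*(n:ℤ)-2 - w % (2*(n:ℤ)-2)

lemma zig_bounds (n : ℕ) (hn : 2 ≤ n) (w : ℤ) : 0 ≤ zig n w ∧ zig n w < n := by
  have hm : (0:ℤ) < 2*(n:ℤ)-2 := by omega
  have hr0 : 0 ≤ w % (2*(n:ℤ)-2) := Int.emod_nonneg w (by omega)
  have hr1 : w % (2*(n:ℤ)-2) < 2*(n:ℤ)-2 := Int.emod_lt_of_pos w hm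
  unfold zig; split_ifs <;> omega

lemma zig_of_range (n : ℕ) (hn : 2 ≤ n) (w : ℤ) (h0 : 0 ≤ w) (h1 : w < n) :
    zig n w = w := by
  have : w % (2*(n:ℤ)-2) = w := Int.emod_eq_of_lt h0 (by omega)
  unfold zig; rw [this]; split_ifs with h <;> omega

lemma zig_step (n : ℕ) (hn : 2 ≤ n) (w : ℤ) :
    (zig n (w+1) = zig n w + 1 ∧ zig n w + 1 < n) ∨ zig n w = zig n (w+1) + 1 := by
  have hm : (0:ℤ) < 2*(n:ℤ)-2 := by omega
  have hr0 : 0 ≤ w % (2*(n:ℤ)-2) := Int.emod_nonneg w (by omega)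
  have hr1 : w % (2*(n:ℤ)-2) < 2*(n:ℤ)-2 := Int.emod_lt_of_pos w hm
  have key : (w+1) % (2*(n:ℤ)-2) = (w % (2*(n:ℤ)-2) + 1) % (2*(n:ℤ)-2) := by
    conv_lhs => rw [show w + 1 = (w % (2*(n:ℤ)-2) + 1) + (2*(n:ℤ)-2) * (w / (2*(n:ℤ)-2)) from by
      have h := Int.mul_ediv_add_emod w (2*(n:ℤ)-2); linarith]
    exact Int.add_mul_emod_self_left ..
  by_cases hc : w % (2*(n:ℤ)-2) + 1 < 2*(n:ℤ)-2
  · have key2 : (w+1) % (2*(n:ℤ)-2) = w % (2*(n:ℤ)-2) + 1 := by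
      rw [key]; exact Int.emod_eq_of_lt (by omega) hc
    unfold zig; rw [key2]; split_ifs <;> omega
  · have key2 : (w+1) % (2*(n:ℤ)-2) = 0 := by
      rw [key, show w % (2*(n:ℤ)-2) + 1 = 2*(n:ℤ)-2 from by omega, Int.emod_self]
    unfold zig; rw [key2]; split_ifs <;> omega

/-- zig as a map into `Fin n`. -/
def zigFin (n : ℕ) (hn : 2 ≤ n) (w : ℤ) : Fin n :=
  ⟨(zig n w).toNat, by have := zig_bounds n hn w; omega⟩

/-- for `n ≥ 2`, a pattern on `[1,n]^d` is the restriction of a globally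
admissible configuration iff it is locally admissible; consequently the number of
globally admissible patterns on `[1,n]^d` equals `C_n`. -/
theorem globally_admissible_iff_locally_admissible
    {A : Type*} [Fintype A] [Nonempty A]
    (d : ℕ) (hd : 1 ≤ d) (F : Fin d → Set (A × A))
    (hF : ∀ (i : Fin d) (a b : A), (a, b) ∈ F i ↔ (b, a) ∈ F i)
    (n : ℕ) (hn : 2 ≤ n) :
    (∀ P : (Fin d → Fin n) → A,
      (∃ x : (Fin d → ℤ) → A, IsGlobAdm d F x ∧
        ∀ y : Fin d → Fin n, x (fun i => (y i : ℤ) + 1) = P y) ↔ IsLocAdm d n F P) ∧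
    Nat.card {P : (Fin d → Fin n) → A //
        ∃ x : (Fin d → ℤ) → A, IsGlobAdm d F x ∧
          ∀ y : Fin d → Fin n, x (fun i => (y i : ℤ) + 1) = P y} =
      patCount d F n := by
  have main : ∀ P : (Fin d → Fin n) → A,
      (∃ x : (Fin d → ℤ) → A, IsGlobAdm d F x ∧
        ∀ y : Fin d → Fin n, x (fun i => (y i : ℤ) + 1) = P y) ↔ IsLocAdm d n F P := by
    intro P
    constructor
    · rintro ⟨x, hx, hres⟩ y k h
      have hv := hx (fun i => (y i : ℤ) + 1) k
      have e1 : x (fun i => (y i : ℤ) + 1) = P y := hres y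
      have e2 : Function.update (fun i => ((y i : ℤ) + 1)) k
          ((fun i => ((y i : ℤ) + 1)) k + 1)
          = fun i => ((Function.update y k ⟨(y k : ℕ) + 1, h⟩ i : ℤ) + 1) := by
        funext i
        by_cases hik : i = k
        · subst hik; simp [Function.update_self]
        · simp [Function.update_of_ne hik]
      rw [e1, e2, hres] at hv
      exact hv
    · intro hP
      refine ⟨fun v => P (fun i => zigFin n hn (v i - 1)), ?_, ?_⟩
      · intro v k
        set y : Fin d → Fin n := fun i => zigFin n hn (v i - 1) with hy
        have hupd : (fun i => zigFin n hn (Function.update v k (v k + 1) i - 1))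
            = Function.update y k (zigFin n hn (v k)) := by
          funext i
          by_cases hik : i = k
          · subst hik
            simp only [Function.update_self]
            congr 1
            ring
          · simp [Function.update_of_ne hik, hy]
        show (P y, P (fun i => zigFin n hn (Function.update v k (v k + 1) i - 1))) ∉ F k
        rw [hupd]
        have hw : v k - 1 + 1 = v k := by ring
        have hb := zig_bounds n hn (v k)
        have hb2 := zig_bounds n hn (v k - 1)
        rcases zig_step n hn (v k - 1) with ⟨h1, h2⟩ | h1 <;> rw [hw] at h1
        · -- step up
          have hk : ((y k : ℕ)) + 1 < n := by
            simp only [hy, zigFin]; omega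
          have hfin : zigFin n hn (v k) = ⟨(y k : ℕ) + 1, hk⟩ := by
            apply Fin.ext
            simp only [hy, zigFin]
            omega
          rw [hfin]
          exact hP y k hk
        · -- step down
          have hk : ((zigFin n hn (v k) : ℕ)) + 1 < n := by
            simp only [zigFin]; omega
          have hyk : (⟨(zigFin n hn (v k) : ℕ) + 1, hk⟩ : Fin n) = y k := by
            apply Fin.ext
            simp only [hy, zigFin]
            omega
          have key := hP (Function.update y k (zigFin n hn (v k))) k
            (by rw [Function.update_self]; exact hk)
          simp only [Function.update_self, Function.update_idem] at key
          rw [hyk, Function.update_eq_self] at key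
          intro hmem
          exact key ((hF k _ _).mp hmem)
      · intro y
        show P (fun i => zigFin n hn (((y i : ℤ) + 1) - 1)) = P y
        congr 1
        funext i
        apply Fin.ext
        simp only [zigFin, add_sub_cancel_right]
        rw [zig_of_range n hn _ (by positivity) (by exact_mod_cast (y i).isLt)]
        simp
  refine ⟨main, ?_⟩
  unfold patCount
  exact Nat.card_congr (Equiv.subtypeEquivRight main)
end

section
/- For every n ≥ 2, C_n ≤ C_{n+1}: every locally admissible pattern on [1,n]^d extends to a locally admissible pattern on [1,n+1]^d, and distinct patterns have distinct extensions (the restriction map from locally admissible patterns on [1,n+1]^d to patterns on [1,n]^d is surjective onto the locally admissible ones). -/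
/-- for `n ≥ 2`, every locally admissible pattern on `[1,n]^d` extends to a
locally admissible pattern on `[1,n+1]^d` (the restriction map is surjective onto locally
admissible patterns), and consequently `C_n ≤ C_{n+1}`. -/
theorem patCount_mono
    {A : Type*} [Fintype A] [Nonempty A]
    (d : ℕ) (hd : 1 ≤ d) (F : Fin d → Set (A × A))
    (hF : ∀ (i : Fin d) (a b : A), (a, b) ∈ F i ↔ (b, a) ∈ F i)
    (n : ℕ) (hn : 2 ≤ n) :
    patCount d F n ≤ patCount d F (n + 1) ∧
    (∀ P : (Fin d → Fin n) → A, IsLocAdm d n F P →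
      ∃ Q : (Fin d → Fin (n + 1)) → A, IsLocAdm d (n + 1) F Q ∧
        ∀ x : Fin d → Fin n, Q (fun i => (x i).castSucc) = P x) := by
  classical
  have hn2 : n - 2 < n := by omega
  set f : Fin (n + 1) → Fin n := fun j => if h : (j : ℕ) < n then ⟨j, h⟩ else ⟨n - 2, hn2⟩
    with hfdef
  have key : ∀ P : (Fin d → Fin n) → A, IsLocAdm d n F P →
      IsLocAdm d (n + 1) F (fun x => P (f ∘ x)) ∧
      ∀ x : Fin d → Fin n, P (f ∘ fun i => (x i).castSucc) = P x := by
    intro P hP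
    have hflt : ∀ (j : Fin (n+1)) (h : (j : ℕ) < n), f j = ⟨j, h⟩ := by
      intro j h; simp [hfdef, h]
    constructor
    · intro x k h
      have hupd : f ∘ Function.update x k ⟨(x k : ℕ) + 1, h⟩ =
          Function.update (f ∘ x) k (f ⟨(x k : ℕ) + 1, h⟩) := by
        funext i
        by_cases hik : i = k
        · subst hik; simp
        · simp [Function.update_of_ne hik]
      simp only [hupd]
      by_cases hc : (x k : ℕ) + 1 < n
      · have h1 : (x k : ℕ) < n := by omega
        have e1 : f (x k) = ⟨x k, h1⟩ := hflt _ h1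
        have e2 : f ⟨(x k : ℕ) + 1, h⟩ = ⟨(x k : ℕ) + 1, hc⟩ := hflt _ hc
        have hc' : ((f ∘ x) k : ℕ) + 1 < n := by
          simp only [Function.comp_apply, e1]; exact hc
        have e3 : Function.update (f ∘ x) k (⟨(x k : ℕ) + 1, hc⟩ : Fin n) =
            Function.update (f ∘ x) k ⟨((f ∘ x) k : ℕ) + 1, hc'⟩ := by
          have hv : (⟨(x k : ℕ) + 1, hc⟩ : Fin n) = ⟨((f ∘ x) k : ℕ) + 1, hc'⟩ :=
            Fin.ext (by show (x k : ℕ) + 1 = (f (x k) : ℕ) + 1; rw [e1])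
          rw [hv]
        rw [e2, e3]
        exact hP (f ∘ x) k hc'
      · -- x k = n - 1
        have hxk : (x k : ℕ) = n - 1 := by omega
        have e1 : f (x k) = ⟨n - 1, by omega⟩ := by
          rw [hflt _ (by omega)]; exact Fin.ext (by simp [hxk])
        have e2 : f ⟨(x k : ℕ) + 1, h⟩ = ⟨n - 2, hn2⟩ := by
          simp [hfdef, hxk]; omega
        set y := f ∘ x with hy
        set z := Function.update y k (⟨n - 2, hn2⟩ : Fin n) with hz
        have hzk : (z k : ℕ) = n - 2 := by simp [hz]
        have hc2 : (z k : ℕ) + 1 < n := by omega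
        have hadm := hP z k hc2
        have hval : (⟨(z k : ℕ) + 1, hc2⟩ : Fin n) = y k := by
          apply Fin.ext
          simp [hzk, hy, e1]
          omega
        have hup : Function.update z k ⟨(z k : ℕ) + 1, hc2⟩ = y := by
          rw [hval, hz, Function.update_idem, Function.update_eq_self]
        rw [hup] at hadm
        rw [e2]
        intro hmem
        exact hadm ((hF k _ _).mp hmem)
    · intro x
      congr 1
      funext i
      show f (x i).castSucc = x i
      rw [hflt ((x i).castSucc) (by simp [(x i).isLt])]
      exact Fin.ext (by simp)
  refine ⟨?_, fun P hP => ⟨fun x => P (f ∘ x), (key P hP).1, (key P hP).2⟩⟩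
  have hinj : Function.Injective
      (fun P : {P : (Fin d → Fin n) → A // IsLocAdm d n F P} =>
        (⟨fun x => P.1 (f ∘ x), (key P.1 P.2).1⟩ :
          {Q : (Fin d → Fin (n+1)) → A // IsLocAdm d (n+1) F Q})) := by
    intro P1 P2 hEq
    ext x
    have h1 := (key P1.1 P1.2).2 x
    have h2 := (key P2.1 P2.2).2 x
    rw [← h1, ← h2]
    exact congrFun (congrArg Subtype.val hEq) (fun i => (x i).castSucc)
  exact Nat.card_le_card_of_injective _ hinj
end

section
/- For every n ≥ 1, C_{2n−1} ≥ Σ_{s ∈ S} (C_n^{(s)})^{2^d}, where the sum is over all states s of patterns on [1,n]^d. (Given any 2^d locally admissible patterns on [1,n]^d sharing the same state, applying to the t-th pattern the composition of the coordinate flips indexed by the binary digits of t and translating by (n−1) times the corresponding 0-1 vector yields a locally admissible pattern on [1,2n−1]^d, and distinct 2^d-tuples yield distinct patterns.) -/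
/-- The boundary `[1,n]^d \ [1,n-1]^d`: points with at least one coordinate equal to `n`. -/
def Bdry (d n : ℕ) : Type := {x : Fin d → Fin n // ∃ i, (x i : ℕ) + 1 = n}

instance (d n : ℕ) : Fintype (Bdry d n) := by unfold Bdry; infer_instance
instance (d n : ℕ) : DecidableEq (Bdry d n) := by unfold Bdry; infer_instance

/-- `stateCount d F n s` is `C_n^{(s)}`, the number of locally admissible patterns on
`[1,n]^d` whose state (restriction to the boundary) is `s`. -/
noncomputable def stateCount {A : Type*} [Fintype A] (d : ℕ) (F : Fin d → Set (A × A))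
    (n : ℕ) (s : Bdry d n → A) : ℕ :=
  Nat.card {P : (Fin d → Fin n) → A //
    IsLocAdm d n F P ∧ ∀ x : Bdry d n, P x.1 = s x}

/-- Folding map `[1,2n-1] → [1,n]` (0-indexed): reflect about `n-1`. -/
def rgFold {n : ℕ} (j : Fin (2 * n - 1)) : Fin n :=
  ⟨min j.val (2 * (n - 1) - j.val), by have := j.isLt; omega⟩

/-- The glued pattern on `[1,2n-1]^d` from a family of patterns indexed by sign vectors. -/
def rgGlue {A : Type*} {d n : ℕ} (P : (Fin d → Bool) → (Fin d → Fin n) → A) :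
    (Fin d → Fin (2 * n - 1)) → A :=
  fun y => P (fun k => decide (n ≤ (y k).val)) (fun k => rgFold (y k))

def rgLift {d n : ℕ} (hn : 1 ≤ n) (ε : Fin d → Bool) (x : Fin d → Fin n) :
    Fin d → Fin (2 * n - 1) :=
  fun k => if ε k then ⟨2 * (n - 1) - (x k).val, by have := (x k).isLt; omega⟩
    else ⟨(x k).val, by have := (x k).isLt; omega⟩

lemma rgFold_lift {d n : ℕ} (hn : 1 ≤ n) (ε : Fin d → Bool) (x : Fin d → Fin n) (k : Fin d) :
    rgFold (rgLift hn ε x k) = x k := by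
  have := (x k).isLt
  unfold rgLift rgFold
  rcases h : ε k with _ | _ <;> (apply Fin.ext; simp [h]) <;> omega

section agree

variable {A : Type*} {d n : ℕ} {s : Bdry d n → A}
  {P : (Fin d → Bool) → (Fin d → Fin n) → A}
  (hst : ∀ ε (x : Bdry d n), P ε x.1 = s x)

include hst

lemma rgAgree (ε ε' : Fin d → Bool) (x : Fin d → Fin n)
    (h : ∀ k, ε k ≠ ε' k → (x k : ℕ) + 1 = n) : P ε x = P ε' x := by
  by_cases hee : ε = ε'
  · rw [hee]
  · obtain ⟨k, hk⟩ := Function.ne_iff.mp hee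
    have hx : ∃ i, (x i : ℕ) + 1 = n := ⟨k, h k hk⟩
    rw [hst ε ⟨x, hx⟩, hst ε' ⟨x, hx⟩]

lemma rgGlue_lift (hn : 1 ≤ n) (ε : Fin d → Bool) (x : Fin d → Fin n) :
    rgGlue P (rgLift hn ε x) = P ε x := by
  unfold rgGlue
  have hf : (fun k => rgFold (rgLift hn ε x k)) = x := funext fun k => rgFold_lift hn ε x k
  rw [hf]
  apply rgAgree hst
  intro k hk
  have := (x k).isLt
  unfold rgLift at hk
  rcases h : ε k with _ | _ <;> simp [h] at hk <;> omega

lemma rgGlue_adm (F : Fin d → Set (A × A))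
    (hF : ∀ (i : Fin d) (a b : A), (a, b) ∈ F i ↔ (b, a) ∈ F i)
    (hadm : ∀ ε, IsLocAdm d n F (P ε)) :
    IsLocAdm d (2 * n - 1) F (rgGlue P) := by
  intro y k h
  set j := ((y k) : ℕ) with hj
  set y' := Function.update y k (⟨j + 1, h⟩ : Fin (2 * n - 1)) with hy'
  set ε : Fin d → Bool := fun m => decide (n ≤ (y m : ℕ)) with hε
  set x : Fin d → Fin n := fun m => rgFold (y m) with hx
  have hjlt : j < 2 * n - 1 := (y k).isLt
  -- the updated sign vector and folded point
  have hε' : (fun m => decide (n ≤ ((y' m) : ℕ)))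
      = Function.update ε k (decide (n ≤ j + 1)) := by
    funext m
    rcases eq_or_ne m k with rfl | hm
    · simp [hy']
    · simp [hy', hm, Function.update_of_ne hm, hε]
  have hx' : (fun m => rgFold (y' m))
      = Function.update x k (rgFold ⟨j + 1, h⟩) := by
    funext m
    rcases eq_or_ne m k with rfl | hm
    · simp [hy']
    · simp [hy', hm, Function.update_of_ne hm, hx]
  have hxk : (x k : ℕ) = min j (2 * (n - 1) - j) := rfl
  show (rgGlue P y, rgGlue P y') ∉ F k
  unfold rgGlue
  have hεy : (fun m => decide (n ≤ ((y m) : ℕ))) = ε := rfl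
  have hxy : (fun m => rgFold (y m)) = x := rfl
  rw [hε', hx', hεy, hxy]
  rcases lt_trichotomy (j + 1) n with hc | hc | hc
  · -- both in the lower half
    have he : Function.update ε k (decide (n ≤ j + 1)) = ε := by
      funext m
      rcases eq_or_ne m k with rfl | hm
      · simp [hε]; omega
      · simp [Function.update_of_ne hm]
    have hxkv : (x k : ℕ) + 1 < n := by rw [hxk]; omega
    have hfold : rgFold (⟨j + 1, h⟩ : Fin (2 * n - 1)) = ⟨(x k : ℕ) + 1, hxkv⟩ := by
      apply Fin.ext; simp [rgFold, hxk]; omega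
    rw [he, hfold]
    exact hadm ε x k hxkv
  · -- crossing the reflection hyperplane: j + 1 = n
    have hn2 : 2 ≤ n := by omega
    set εt := Function.update ε k true with hεt
    have he : Function.update ε k (decide (n ≤ j + 1)) = εt := by
      rw [hεt, decide_eq_true (show n ≤ j + 1 by omega)]
    rw [he]
    set x' := Function.update x k (rgFold ⟨j + 1, h⟩) with hx'd
    have hx'k : (x' k : ℕ) = n - 2 := by
      simp [hx'd, rgFold]; omega
    have hx'kv : (x' k : ℕ) + 1 < n := by omega
    have hxeq : x = Function.update x' k ⟨(x' k : ℕ) + 1, hx'kv⟩ := by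
      funext m
      rcases eq_or_ne m k with rfl | hm
      · rw [Function.update_self]; apply Fin.ext; simp [hxk]; omega
      · rw [Function.update_of_ne hm, hx'd, Function.update_of_ne hm]
    have hagree : P ε x = P εt x := by
      apply rgAgree hst
      intro m hm
      rcases eq_or_ne m k with rfl | hmk
      · rw [hxk]; omega
      · exfalso; exact hm (by rw [hεt, Function.update_of_ne hmk])
    rw [hagree, hxeq]
    intro hmem
    exact hadm εt x' k hx'kv ((hF k _ _).mpr hmem)
  · -- both in the upper half
    have he : Function.update ε k (decide (n ≤ j + 1)) = ε := by
      funext m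
      rcases eq_or_ne m k with rfl | hm
      · simp [hε]; omega
      · simp [Function.update_of_ne hm]
    rw [he]
    set x' := Function.update x k (rgFold ⟨j + 1, h⟩) with hx'd
    have hx'k : (x' k : ℕ) = 2 * (n - 1) - (j + 1) := by
      simp [hx'd, rgFold]; omega
    have hx'kv : (x' k : ℕ) + 1 < n := by omega
    have hxeq : x = Function.update x' k ⟨(x' k : ℕ) + 1, hx'kv⟩ := by
      funext m
      rcases eq_or_ne m k with rfl | hm
      · rw [Function.update_self]; apply Fin.ext; simp [hxk]; omega
      · rw [Function.update_of_ne hm, hx'd, Function.update_of_ne hm]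
    rw [hxeq]
    intro hmem
    exact hadm ε x' k hx'kv ((hF k _ _).mpr hmem)

end agree

/-- `C_{2n-1} ≥ Σ_{s} (C_n^{(s)})^{2^d}` (the sum over states `s` not
realized by any locally admissible pattern contributes `0`). -/
theorem reflection_gluing_count
    {A : Type*} [Fintype A] [Nonempty A]
    (d : ℕ) (hd : 1 ≤ d) (F : Fin d → Set (A × A))
    (hF : ∀ (i : Fin d) (a b : A), (a, b) ∈ F i ↔ (b, a) ∈ F i)
    (n : ℕ) (hn : 1 ≤ n) :
    ∑ s : Bdry d n → A, (stateCount d F n s) ^ (2 ^ d) ≤ patCount d F (2 * n - 1) := by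
  classical
  let T : (Bdry d n → A) → Type _ := fun s =>
    (Fin d → Bool) → {P : (Fin d → Fin n) → A //
      IsLocAdm d n F P ∧ ∀ x : Bdry d n, P x.1 = s x}
  have hcard : ∀ s, stateCount d F n s ^ 2 ^ d = Nat.card (T s) := by
    intro s
    have hb : Nat.card (Fin d → Bool) = 2 ^ d := by
      rw [Nat.card_eq_fintype_card]; simp
    rw [Nat.card_fun, hb]
    rfl
  let Φ : (Σ s : Bdry d n → A, T s) →
      {Q : (Fin d → Fin (2 * n - 1)) → A // IsLocAdm d (2 * n - 1) F Q} :=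
    fun p => ⟨rgGlue (fun ε => (p.2 ε).1),
      rgGlue_adm (fun ε x => (p.2 ε).2.2 x) F hF (fun ε => (p.2 ε).2.1)⟩
  have hinj : Function.Injective Φ := by
    rintro ⟨s, P⟩ ⟨s', P'⟩ hpq
    have hg : rgGlue (fun ε => (P ε).1) = rgGlue (fun ε => (P' ε).1) :=
      congrArg Subtype.val hpq
    have hPP : ∀ ε x, (P ε).1 x = (P' ε).1 x := by
      intro ε x
      have h1 := rgGlue_lift (fun ε x => (P ε).2.2 x) hn ε x
      have h2 := rgGlue_lift (fun ε x => (P' ε).2.2 x) hn ε x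
      rw [← h1, ← h2, hg]
    have hss : s = s' := by
      funext xb
      rw [← (P (fun _ => false)).2.2 xb, hPP, (P' (fun _ => false)).2.2 xb]
    subst hss
    exact congrArg (Sigma.mk s) (funext fun ε => Subtype.ext (funext fun x => hPP ε x))
  haveI : ∀ s, Fintype (T s) := fun s => Fintype.ofFinite _
  calc ∑ s : Bdry d n → A, stateCount d F n s ^ 2 ^ d
      = ∑ s : Bdry d n → A, Nat.card (T s) := by
        exact Finset.sum_congr rfl fun s _ => hcard s
    _ = Nat.card (Σ s : Bdry d n → A, T s) := by
        rw [Nat.card_eq_fintype_card, Fintype.card_sigma]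
        exact Finset.sum_congr rfl fun s _ => Nat.card_eq_fintype_card
    _ ≤ patCount d F (2 * n - 1) := Nat.card_le_card_of_injective Φ hinj
end

section
/- For every n ≥ 1, C_{2n+1} · |Σ|^{(2^d−1)((n+1)^d − n^d)} ≥ (C_{n+1})^{2^d}. -/
namespace KeyRec

variable {A : Type*}

/-- Fold the big interval `Fin (2n+1)` onto `Fin (n+1)` by reflecting at `n`. -/
def kfold (n : ℕ) (j : Fin (2 * n + 1)) : Fin (n + 1) :=
  if h : (j : ℕ) ≤ n then ⟨(j : ℕ), by omega⟩ else ⟨2 * n - (j : ℕ), by omega⟩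

lemma kfold_val (n : ℕ) (j : Fin (2 * n + 1)) :
    ((kfold n j : Fin (n+1)) : ℕ) = if (j : ℕ) ≤ n then (j : ℕ) else 2 * n - (j : ℕ) := by
  rw [kfold]; split <;> simp_all

/-- Unfold: embed `Fin (n+1)` into `Fin (2n+1)`, directly or reflected. -/
def kunf (n : ℕ) (e : Bool) (y : Fin (n + 1)) : Fin (2 * n + 1) :=
  if e then ⟨2 * n - (y : ℕ), by omega⟩ else ⟨(y : ℕ), by omega⟩

lemma kunf_val (n : ℕ) (e : Bool) (y : Fin (n + 1)) :
    ((kunf n e y : Fin (2*n+1)) : ℕ) = if e then 2 * n - (y : ℕ) else (y : ℕ) := by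
  rw [kunf]; split <;> simp_all

/-- Which half of the big interval a point lies in. -/
def sgn (n : ℕ) (j : Fin (2 * n + 1)) : Bool := decide (n < (j : ℕ))

lemma kfold_kunf (n : ℕ) (e : Bool) (y : Fin (n + 1)) : kfold n (kunf n e y) = y := by
  have hy := y.isLt
  apply Fin.ext
  rw [kfold_val, kunf_val]
  cases e <;> simp only [if_true, if_false, Bool.false_eq_true] <;> split <;> omega

lemma sgn_kunf (n : ℕ) (e : Bool) (y : Fin (n + 1)) :
    sgn n (kunf n e y) = (e && decide ((y : ℕ) < n)) := by
  have hy := y.isLt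
  rw [sgn, kunf]
  cases e <;> simp <;> omega

/-- Glue a family of patterns on the small cube into a pattern on the big cube. -/
def glue (d n : ℕ) (f : (Fin d → Bool) → ((Fin d → Fin (n + 1)) → A)) :
    (Fin d → Fin (2 * n + 1)) → A :=
  fun x => f (fun i => sgn n (x i)) (fun i => kfold n (x i))

lemma glue_kunf (d n : ℕ) (f : (Fin d → Bool) → ((Fin d → Fin (n + 1)) → A))
    (ht : ∀ e e' y, (∃ i, (y i : ℕ) = n) → f e y = f e' y)
    (e : Fin d → Bool) (y : Fin d → Fin (n + 1)) :
    glue d n f (fun i => kunf n (e i) (y i)) = f e y := by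
  rw [glue]
  have hy : (fun i => kfold n (kunf n (e i) (y i))) = y := by
    funext i; exact kfold_kunf n (e i) (y i)
  rw [hy]
  by_cases hc : (fun i => sgn n (kunf n (e i) (y i))) = e
  · rw [hc]
  · apply ht
    replace hc := Function.ne_iff.mp hc
    obtain ⟨i, hi⟩ := hc
    refine ⟨i, ?_⟩
    rw [sgn_kunf] at hi
    have := (y i).isLt
    cases h : e i <;> rw [h] at hi <;> simp at hi <;> omega

lemma glue_adm (d n : ℕ) (hn : 1 ≤ n) (F : Fin d → Set (A × A))
    (hF : ∀ (i : Fin d) (a b : A), (a, b) ∈ F i ↔ (b, a) ∈ F i)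
    (f : (Fin d → Bool) → ((Fin d → Fin (n + 1)) → A))
    (hf : ∀ e, IsLocAdm d (n + 1) F (f e))
    (ht : ∀ e e' y, (∃ i, (y i : ℕ) = n) → f e y = f e' y) :
    IsLocAdm d (2 * n + 1) F (glue d n f) := by
  intro x k h
  set x' : Fin d → Fin (2 * n + 1) := Function.update x k ⟨(x k : ℕ) + 1, h⟩ with hx'
  have hx'k : (x' k : ℕ) = (x k : ℕ) + 1 := by simp [hx']
  have hx'i : ∀ i, i ≠ k → x' i = x i := by
    intro i hi; simp [hx', Function.update_of_ne hi]
  set s : Fin d → Bool := fun i => sgn n (x i) with hs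
  set y : Fin d → Fin (n + 1) := fun i => kfold n (x i) with hy
  have e1 : glue d n f x = f s y := rfl
  rcases lt_trichotomy ((x k : ℕ)) n with hk | hk | hk
  · -- below the middle
    have hs' : (fun i => sgn n (x' i)) = s := by
      funext i
      by_cases hik : i = k
      · subst hik; simp only [hs, sgn, hx'k]; simp; omega
      · rw [hx'i i hik]
    have hbd : (y k : ℕ) + 1 < n + 1 := by
      simp only [hy, kfold_val]; split <;> omega
    have hy' : (fun i => kfold n (x' i)) = Function.update y k ⟨(y k : ℕ) + 1, hbd⟩ := by
      funext i
      by_cases hik : i = k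
      · subst hik
        simp only [Function.update_self]
        apply Fin.ext
        simp only [kfold_val, hx'k, hy]
        split <;> split <;> omega
      · rw [hx'i i hik, Function.update_of_ne hik]
    have e2 : glue d n f x' = f s (Function.update y k ⟨(y k : ℕ) + 1, hbd⟩) := by
      rw [glue, hs', hy']
    rw [e1, e2]
    exact hf s y k hbd
  · -- at the middle: crossing the reflection hyperplane
    have hs' : (fun i => sgn n (x' i)) = Function.update s k true := by
      funext i
      by_cases hik : i = k
      · subst hik; simp only [Function.update_self, sgn, hx'k]; simp; omega
      · rw [hx'i i hik, Function.update_of_ne hik]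
    set s' := Function.update s k true with hs'def
    obtain ⟨z, hzdef⟩ : ∃ z : Fin d → Fin (n + 1),
        z = Function.update y k ⟨n - 1, by omega⟩ := ⟨_, rfl⟩
    have hy' : (fun i => kfold n (x' i)) = z := by
      funext i
      by_cases hik : i = k
      · subst hik
        rw [hzdef]
        simp only [Function.update_self]
        apply Fin.ext
        simp only [kfold_val, hx'k, hk]
        split <;> omega
      · rw [hx'i i hik, hzdef, Function.update_of_ne hik]
    have e2 : glue d n f x' = f s' z := by rw [glue, hs', hy']
    have hyk : (y k : ℕ) = n := by simp only [hy, kfold_val]; split <;> omega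
    have hzk : (z k : ℕ) = n - 1 := by
      rw [hzdef]; simp only [Function.update_self]
    have hz : (z k : ℕ) + 1 < n + 1 := by omega
    have hv : (⟨(z k : ℕ) + 1, hz⟩ : Fin (n + 1)) = y k := by
      apply Fin.ext; simp only [hzk, hyk]; omega
    have hzy : Function.update z k ⟨(z k : ℕ) + 1, hz⟩ = y := by
      rw [hv, hzdef, Function.update_idem, Function.update_eq_self]
    have hadm := hf s' z k hz
    rw [hzy] at hadm
    have htr : f s y = f s' y := ht s s' y ⟨k, hyk⟩
    rw [e1, e2, htr]
    intro hmem
    exact hadm ((hF k _ _).mp hmem)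
  · -- above the middle
    have hs' : (fun i => sgn n (x' i)) = s := by
      funext i
      by_cases hik : i = k
      · subst hik; simp only [hs, sgn, hx'k]; simp; omega
      · rw [hx'i i hik]
    obtain ⟨z, hzdef⟩ : ∃ z : Fin d → Fin (n + 1),
        z = Function.update y k ⟨2 * n - (x k : ℕ) - 1, by omega⟩ := ⟨_, rfl⟩
    have hy' : (fun i => kfold n (x' i)) = z := by
      funext i
      by_cases hik : i = k
      · subst hik
        rw [hzdef]
        simp only [Function.update_self]
        apply Fin.ext
        simp only [kfold_val, hx'k]
        split <;> omega
      · rw [hx'i i hik, hzdef, Function.update_of_ne hik]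
    have e2 : glue d n f x' = f s z := by rw [glue, hs', hy']
    have hyk : (y k : ℕ) = 2 * n - (x k : ℕ) := by
      simp only [hy, kfold_val]; split <;> omega
    have hzk : (z k : ℕ) = 2 * n - (x k : ℕ) - 1 := by
      rw [hzdef]; simp only [Function.update_self]
    have hz : (z k : ℕ) + 1 < n + 1 := by omega
    have hv : (⟨(z k : ℕ) + 1, hz⟩ : Fin (n + 1)) = y k := by
      apply Fin.ext; simp only [hzk, hyk]; omega
    have hzy : Function.update z k ⟨(z k : ℕ) + 1, hz⟩ = y := by
      rw [hv, hzdef, Function.update_idem, Function.update_eq_self]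
    have hadm := hf s z k hz
    rw [hzy] at hadm
    rw [e1, e2]
    intro hmem
    exact hadm ((hF k _ _).mp hmem)

lemma card_bd (d n : ℕ) :
    Nat.card {y : Fin d → Fin (n + 1) // ∃ i, (y i : ℕ) = n} = (n + 1) ^ d - n ^ d := by
  classical
  have h1 : Nat.card {y : Fin d → Fin (n + 1) // ¬ ∃ i, (y i : ℕ) = n} = n ^ d := by
    have e : {y : Fin d → Fin (n + 1) // ¬ ∃ i, (y i : ℕ) = n} ≃ (Fin d → Fin n) := by
      refine ⟨fun y i => ⟨(y.1 i : ℕ), ?_⟩, fun z => ⟨fun i => ⟨(z i : ℕ), by omega⟩, ?_⟩, ?_, ?_⟩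
      · have h3 := y.2
        push_neg at h3
        have h2 := (y.1 i).isLt
        have := h3 i
        omega
      · push_neg
        intro i
        have := (z i).isLt
        simp only
        omega
      · intro y; apply Subtype.ext; funext i; apply Fin.ext; rfl
      · intro z; funext i; apply Fin.ext; rfl
    rw [Nat.card_congr e]
    simp [Nat.card_eq_fintype_card]
  have h2 : Nat.card {y : Fin d → Fin (n + 1) // ∃ i, (y i : ℕ) = n}
      + Nat.card {y : Fin d → Fin (n + 1) // ¬ ∃ i, (y i : ℕ) = n} = (n + 1) ^ d := by
    rw [← Nat.card_sum, Nat.card_congr (Equiv.sumCompl _)]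
    simp [Nat.card_eq_fintype_card]
  exact Nat.eq_sub_of_add_eq (h1 ▸ h2)

lemma nat_card_sigma {ι : Type*} [Fintype ι] (f : ι → Type*) [∀ i, Finite (f i)] :
    Nat.card (Sigma f) = ∑ i, Nat.card (f i) := by
  letI : ∀ i, Fintype (f i) := fun i => Fintype.ofFinite _
  simp [Nat.card_eq_fintype_card]

/-- The set of admissible patterns on the small cube with a given boundary trace. -/
abbrev Fib (d n : ℕ) (F : Fin d → Set (A × A))
    (t : {y : Fin d → Fin (n + 1) // ∃ i, (y i : ℕ) = n} → A) : Type _ :=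
  {P : {P : (Fin d → Fin (n + 1)) → A // IsLocAdm d (n + 1) F P} //
    (fun b : {y : Fin d → Fin (n + 1) // ∃ i, (y i : ℕ) = n} => P.1 b.1) = t}

lemma fib_inj [Fintype A] (d n : ℕ) (hn : 1 ≤ n) (F : Fin d → Set (A × A))
    (hF : ∀ (i : Fin d) (a b : A), (a, b) ∈ F i ↔ (b, a) ∈ F i) :
    Nat.card (Σ t : {y : Fin d → Fin (n + 1) // ∃ i, (y i : ℕ) = n} → A,
        ((Fin d → Bool) → Fib d n F t))
      ≤ Nat.card {Q : (Fin d → Fin (2 * n + 1)) → A // IsLocAdm d (2 * n + 1) F Q} := by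
  classical
  -- trace property of a tuple
  have htr : ∀ (t : {y : Fin d → Fin (n + 1) // ∃ i, (y i : ℕ) = n} → A)
      (g : (Fin d → Bool) → Fib d n F t),
      ∀ e e' y, (∃ i, (y i : ℕ) = n) →
        ((g e).1.1 : (Fin d → Fin (n + 1)) → A) y = ((g e').1.1 : _) y := by
    intro t g e e' y hy
    have h1 := congrFun (g e).2 ⟨y, hy⟩
    have h2 := congrFun (g e').2 ⟨y, hy⟩
    simp only at h1 h2
    rw [h1, h2]
  apply Nat.card_le_card_of_injective
    (f := fun p : (Σ t : {y : Fin d → Fin (n + 1) // ∃ i, (y i : ℕ) = n} → A,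
        ((Fin d → Bool) → Fib d n F t)) =>
      (⟨glue d n (fun e => ((p.2 e).1.1)),
        glue_adm d n hn F hF _ (fun e => (p.2 e).1.2) (htr p.1 p.2)⟩ :
        {Q : (Fin d → Fin (2 * n + 1)) → A // IsLocAdm d (2 * n + 1) F Q}))
  rintro ⟨t, g⟩ ⟨t', g'⟩ hEq
  simp only [Subtype.mk.injEq] at hEq
  -- the underlying families agree
  have hfg : (fun e => ((g e).1.1 : (Fin d → Fin (n + 1)) → A))
      = (fun e => ((g' e).1.1 : (Fin d → Fin (n + 1)) → A)) := by
    funext e y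
    have h1 := glue_kunf d n (fun e => ((g e).1.1)) (htr t g) e y
    have h2 := glue_kunf d n (fun e => ((g' e).1.1)) (htr t' g') e y
    rw [← h1, ← h2, hEq]
  have hfg' : ∀ e, ((g e).1.1 : (Fin d → Fin (n + 1)) → A) = (g' e).1.1 :=
    fun e => congrFun hfg e
  -- the traces agree
  have htt : t = t' := by
    funext b
    have h1 := congrFun (g (fun _ => false)).2 b
    have h2 := congrFun (g' (fun _ => false)).2 b
    rw [← h1, ← h2, hfg' (fun _ => false)]
  subst htt
  have hg : g = g' := by
    funext e
    exact Subtype.ext (Subtype.ext (hfg' e))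
  rw [hg]


end KeyRec

open KeyRec in
/-- `C_{2n+1} · |Σ|^{(2^d−1)((n+1)^d − n^d)} ≥ (C_{n+1})^{2^d}`. -/
theorem key_recursive_bound
    {A : Type*} [Fintype A] [Nonempty A]
    (d : ℕ) (hd : 1 ≤ d) (F : Fin d → Set (A × A))
    (hF : ∀ (i : Fin d) (a b : A), (a, b) ∈ F i ↔ (b, a) ∈ F i)
    (n : ℕ) (hn : 1 ≤ n) :
    (patCount d F (n + 1)) ^ (2 ^ d) ≤
      patCount d F (2 * n + 1) *
        (Fintype.card A) ^ ((2 ^ d - 1) * ((n + 1) ^ d - n ^ d)) := by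
  classical
  -- decompose C_{n+1} along boundary traces
  have hdec : patCount d F (n + 1)
      = ∑ t : ({y : Fin d → Fin (n + 1) // ∃ i, (y i : ℕ) = n} → A),
          Nat.card (Fib d n F t) := by
    rw [patCount, ← nat_card_sigma]
    exact (Nat.card_congr (Equiv.sigmaFiberEquiv
      (fun P : {P : (Fin d → Fin (n + 1)) → A // IsLocAdm d (n + 1) F P} =>
        (fun b : {y : Fin d → Fin (n + 1) // ∃ i, (y i : ℕ) = n} => P.1 b.1)))).symm
  -- the number of `2^d`-tuples with a common trace is at most `C_{2n+1}`
  have hcardE : Nat.card (Fin d → Bool) = 2 ^ d := by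
    simp [Nat.card_eq_fintype_card]
  have hinj : ∑ t : ({y : Fin d → Fin (n + 1) // ∃ i, (y i : ℕ) = n} → A),
      (Nat.card (Fib d n F t)) ^ (2 ^ d) ≤ patCount d F (2 * n + 1) := by
    have h2 : Nat.card (Σ t : ({y : Fin d → Fin (n + 1) // ∃ i, (y i : ℕ) = n} → A),
        ((Fin d → Bool) → Fib d n F t))
        = ∑ t : ({y : Fin d → Fin (n + 1) // ∃ i, (y i : ℕ) = n} → A),
          (Nat.card (Fib d n F t)) ^ (2 ^ d) := by
      rw [nat_card_sigma]
      exact Finset.sum_congr rfl (fun t _ => by rw [Nat.card_fun, hcardE])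
    rw [← h2, patCount]
    exact fib_inj d n hn F hF
  -- Jensen's inequality
  have hjen : (∑ t : ({y : Fin d → Fin (n + 1) // ∃ i, (y i : ℕ) = n} → A),
        Nat.card (Fib d n F t)) ^ (2 ^ d)
      ≤ (Fintype.card A) ^ (((n + 1) ^ d - n ^ d) * (2 ^ d - 1))
        * ∑ t : ({y : Fin d → Fin (n + 1) // ∃ i, (y i : ℕ) = n} → A),
          (Nat.card (Fib d n F t)) ^ (2 ^ d) := by
    have h2 : 2 ^ d = (2 ^ d - 1) + 1 :=
      (Nat.sub_add_cancel Nat.one_le_two_pow).symm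
    rw [h2]
    calc (∑ t : ({y : Fin d → Fin (n + 1) // ∃ i, (y i : ℕ) = n} → A),
          Nat.card (Fib d n F t)) ^ ((2 ^ d - 1) + 1)
        ≤ (Finset.univ : Finset ({y : Fin d → Fin (n + 1) // ∃ i, (y i : ℕ) = n} → A)).card
            ^ (2 ^ d - 1)
          * ∑ t : ({y : Fin d → Fin (n + 1) // ∃ i, (y i : ℕ) = n} → A),
            (Nat.card (Fib d n F t)) ^ ((2 ^ d - 1) + 1) :=
        pow_sum_le_card_mul_sum_pow (fun i _ => Nat.zero_le _) (2 ^ d - 1)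
      _ = (Fintype.card A) ^ (((n + 1) ^ d - n ^ d) * (2 ^ d - 1))
          * ∑ t : ({y : Fin d → Fin (n + 1) // ∃ i, (y i : ℕ) = n} → A),
            (Nat.card (Fib d n F t)) ^ ((2 ^ d - 1) + 1) := by
          congr 1
          rw [Finset.card_univ, Fintype.card_fun, ← pow_mul]
          congr 2
          rw [← Nat.card_eq_fintype_card]
          exact card_bd d n
  -- assemble
  rw [hdec]
  calc (∑ t : ({y : Fin d → Fin (n + 1) // ∃ i, (y i : ℕ) = n} → A),
        Nat.card (Fib d n F t)) ^ 2 ^ d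
      ≤ (Fintype.card A) ^ (((n + 1) ^ d - n ^ d) * (2 ^ d - 1))
        * ∑ t : ({y : Fin d → Fin (n + 1) // ∃ i, (y i : ℕ) = n} → A),
          (Nat.card (Fib d n F t)) ^ (2 ^ d) := hjen
    _ ≤ (Fintype.card A) ^ (((n + 1) ^ d - n ^ d) * (2 ^ d - 1))
        * patCount d F (2 * n + 1) := Nat.mul_le_mul_left _ hinj
    _ = patCount d F (2 * n + 1)
        * (Fintype.card A) ^ ((2 ^ d - 1) * ((n + 1) ^ d - n ^ d)) := by
        rw [mul_comm, Nat.mul_comm ((n + 1) ^ d - n ^ d)]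
end

section
/- For all integers d ≥ 1 and n ≥ 0, q_d(2n) + (2^d − 1)((n+1)^d − n^d) = 2^d · q_d(n), where q_d(m) = (2^d − 1) · Σ_{k=0}^{d−1} (binom(d,k)/(2^d − 2^k)) · m^k. -/
/-- The polynomial `q_d(m) = (2^d − 1) · Σ_{k=0}^{d−1} (binom(d,k)/(2^d − 2^k)) · m^k`. -/
def qPoly (d : ℕ) (m : ℚ) : ℚ :=
  (2 ^ d - 1) * ∑ k ∈ Finset.range d, (d.choose k : ℚ) / (2 ^ d - 2 ^ k) * m ^ k

/-- `q_d(2n) + (2^d − 1)((n+1)^d − n^d) = 2^d · q_d(n)` for `d ≥ 1`, `n ≥ 0`. -/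
theorem qPoly_doubling (d : ℕ) (hd : 1 ≤ d) (n : ℕ) :
    qPoly d (2 * n) + (2 ^ d - 1) * (((n : ℚ) + 1) ^ d - (n : ℚ) ^ d) =
      2 ^ d * qPoly d n := by
  have hbin : ((n : ℚ) + 1) ^ d - (n : ℚ) ^ d
      = ∑ k ∈ Finset.range d, (d.choose k : ℚ) * (n : ℚ) ^ k := by
    have h := add_pow (n : ℚ) 1 d
    simp only [one_pow, mul_one] at h
    rw [Finset.sum_range_succ] at h
    simp only [Nat.choose_self, Nat.cast_one, mul_one] at h
    rw [h, add_sub_cancel_right]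
    exact Finset.sum_congr rfl fun k _ => mul_comm _ _
  unfold qPoly
  rw [hbin, Finset.mul_sum, Finset.mul_sum, Finset.mul_sum, Finset.mul_sum, ← Finset.sum_add_distrib]
  refine Finset.sum_congr rfl fun k hk => ?_
  have hk' : k < d := Finset.mem_range.mp hk
  have hne : (2 : ℚ) ^ d - 2 ^ k ≠ 0 := by
    have : (2 : ℚ) ^ k < 2 ^ d := by
      exact pow_lt_pow_right₀ (by norm_num) hk'
    linarith
  field_simp
  ring
end

section
/- Assume C_2 > 0 and let L = lim_{n→∞} (1/n^d) · log C_n (the topological entropy of the symmetric nearest-neighbor subshift). Then for every n ≥ 1, L ≤ (1/n^d) · log C_n. -/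
lemma idx_lt (n m : ℕ) (b : Fin m) (j : Fin n) : (b : ℕ) * n + (j : ℕ) < n * m := by
  calc (b : ℕ) * n + (j : ℕ) < (b : ℕ) * n + n := by omega
    _ = ((b : ℕ) + 1) * n := by ring
    _ ≤ m * n := Nat.mul_le_mul_right n b.2
    _ = n * m := Nat.mul_comm m n

lemma restrict_adm {A : Type*} (d n m : ℕ) (F : Fin d → Set (A × A))
    (P : (Fin d → Fin (n * m)) → A) (hP : IsLocAdm d (n * m) F P)
    (b : Fin d → Fin m) :
    IsLocAdm d n F (fun j => P (fun k => ⟨(b k : ℕ) * n + (j k : ℕ), idx_lt n m (b k) (j k)⟩)) := by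
  intro j k h
  have h' : ((b k : ℕ) * n + (j k : ℕ)) + 1 < n * m := by
    have := idx_lt n m (b k) (⟨(j k : ℕ) + 1, h⟩ : Fin n)
    simpa [Nat.add_assoc] using this
  have H := hP (fun k' => ⟨(b k' : ℕ) * n + (j k' : ℕ), idx_lt n m (b k') (j k')⟩) k h'
  have e : (fun k' => (⟨(b k' : ℕ) * n + (((Function.update j k (⟨(j k : ℕ) + 1, h⟩ : Fin n)) k' : ℕ)), idx_lt n m (b k') _⟩ : Fin (n * m)))
      = Function.update (fun k' => (⟨(b k' : ℕ) * n + (j k' : ℕ), idx_lt n m (b k') (j k')⟩ : Fin (n * m))) k ⟨(b k : ℕ) * n + (j k : ℕ) + 1, h'⟩ := by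
    funext k'
    rcases eq_or_ne k' k with rfl | hk
    · simp [Fin.ext_iff, Nat.add_assoc]
    · simp [Function.update_of_ne hk]
  simp only []
  rw [e]
  simpa using H

set_option maxHeartbeats 1000000 in
lemma patCount_mul_le {A : Type*} [Fintype A] (d n m : ℕ) (hn : 1 ≤ n)
    (F : Fin d → Set (A × A)) :
    patCount d F (n * m) ≤ patCount d F n ^ m ^ d := by
  classical
  set S := {P : (Fin d → Fin (n * m)) → A // IsLocAdm d (n * m) F P}
  set T := {Q : (Fin d → Fin n) → A // IsLocAdm d n F Q}
  let r : S → (Fin d → Fin m) → T := fun P b =>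
    ⟨fun j => P.1 (fun k => ⟨(b k : ℕ) * n + (j k : ℕ), idx_lt n m (b k) (j k)⟩),
      restrict_adm d n m F P.1 P.2 b⟩
  have hr : Function.Injective r := by
    intro P1 P2 hEq
    ext x
    have hb : ∀ k, (x k : ℕ) / n < m := by
      intro k
      have := (x k).2
      exact Nat.div_lt_of_lt_mul (by omega)
    have hj : ∀ k, (x k : ℕ) % n < n := fun k => Nat.mod_lt _ (by omega)
    have := congrArg (fun f => (f (fun k => ⟨(x k : ℕ) / n, hb k⟩)).1
      (fun k => ⟨(x k : ℕ) % n, hj k⟩)) hEq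
    have ex : (fun k => (⟨(x k : ℕ) / n * n + (x k : ℕ) % n,
        idx_lt n m (⟨(x k : ℕ) / n, hb k⟩ : Fin m) (⟨(x k : ℕ) % n, hj k⟩ : Fin n)⟩ : Fin (n * m))) = x := by
      funext k; exact Fin.ext (Nat.div_add_mod' _ _)
    simp only [r] at this
    rw [ex] at this
    exact this
  have h1 : Nat.card S ≤ Nat.card ((Fin d → Fin m) → T) :=
    Nat.card_le_card_of_injective r hr
  have h2 : Nat.card ((Fin d → Fin m) → T) = Nat.card T ^ m ^ d := by
    rw [Nat.card_fun]
    congr 1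
    simp [Nat.card_eq_fintype_card]
  simpa [patCount, S, T, h2] using h1.trans_eq h2

open Filter in
/-- if `C_2 > 0` and `L = lim (1/n^d) log C_n`, then for every `n ≥ 1`,
`L ≤ (1/n^d) log C_n`. -/
theorem entropy_upper_bound
    {A : Type*} [Fintype A] [Nonempty A]
    (d : ℕ) (hd : 1 ≤ d) (F : Fin d → Set (A × A))
    (hF : ∀ (i : Fin d) (a b : A), (a, b) ∈ F i ↔ (b, a) ∈ F i)
    (h2 : 0 < patCount d F 2) (L : ℝ)
    (hL : Tendsto (fun n : ℕ => (1 / (n : ℝ) ^ d) * Real.log (patCount d F n)) atTop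
      (nhds L)) :
    ∀ n : ℕ, 1 ≤ n → L ≤ (1 / (n : ℝ) ^ d) * Real.log (patCount d F n) := by
  intro n hn
  have hmono : Tendsto (fun m : ℕ => n * m) atTop atTop :=
    tendsto_atTop_mono (fun m => Nat.le_mul_of_pos_left m (by omega)) tendsto_id
  have hsub := hL.comp hmono
  refine le_of_tendsto hsub ?_
  filter_upwards [eventually_ge_atTop 1] with m hm
  have hn' : (0:ℝ) < (n:ℝ) := by exact_mod_cast hn
  have hm' : (0:ℝ) < (m:ℝ) := by exact_mod_cast hm
  have hlog : Real.log (patCount d F (n * m)) ≤ (m:ℝ)^d * Real.log (patCount d F n) := by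
    rcases Nat.eq_zero_or_pos (patCount d F (n * m)) with h0 | hpos
    · rw [h0]
      simp only [Nat.cast_zero, Real.log_zero]
      have h1 : (0:ℝ) ≤ Real.log (patCount d F n) := by
        rcases Nat.eq_zero_or_pos (patCount d F n) with h1 | h1
        · simp [h1]
        · exact Real.log_nonneg (by exact_mod_cast h1)
      positivity
    · have hle := patCount_mul_le d n m hn F
      calc Real.log (patCount d F (n * m))
          ≤ Real.log ((patCount d F n : ℝ) ^ m ^ d) := by
            apply Real.log_le_log (by exact_mod_cast hpos)
            exact_mod_cast hle
        _ = (m:ℝ)^d * Real.log (patCount d F n) := by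
            rw [Real.log_pow]; push_cast; ring
  show (1 / ((n * m : ℕ) : ℝ) ^ d) * Real.log (patCount d F (n * m)) ≤ _
  rw [Nat.cast_mul, mul_pow]
  calc (1 / ((n:ℝ)^d * (m:ℝ)^d)) * Real.log (patCount d F (n * m))
      ≤ (1 / ((n:ℝ)^d * (m:ℝ)^d)) * ((m:ℝ)^d * Real.log (patCount d F n)) := by
        apply mul_le_mul_of_nonneg_left hlog
        positivity
    _ = (1 / (n:ℝ)^d) * Real.log (patCount d F n) := by
        field_simp
end

section
/- Assume C_2 > 0 and let L = lim_{n→∞} (1/n^d) · log C_n. Then for every n ≥ 1, (1/n^d) · (log C_{n+1} − q_d(n) · log |Σ|) ≤ L, where q_d(n) = (2^d − 1) · Σ_{k=0}^{d−1} (binom(d,k)/(2^d − 2^k)) · n^k. -/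
/-- The polynomial `q_d(m) = (2^d − 1) · Σ_{k=0}^{d−1} (binom(d,k)/(2^d − 2^k)) · m^k`,
as a real function. -/
noncomputable def qReal (d : ℕ) (m : ℝ) : ℝ :=
  (2 ^ d - 1) * ∑ k ∈ Finset.range d, (d.choose k : ℝ) / (2 ^ d - 2 ^ k) * m ^ k

/-!
Cut `[0, 2m]^d` by the hyperplanes through its centre into `2^d` orthants, each a reflected
copy of `[0, m]^d`. Admissible patterns on `[0, m]^d` that agree on the far boundary (the sites
with some coordinate equal to `m`) can be reflected into the orthants and glued: a forbidden pair
is symmetric, so reflection preserves admissibility, and the gluing is injective. The far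
boundary has `t = (m+1)^d - m^d` sites, so the power-mean inequality over the `|Σ|^t` boundary
traces gives `C_{m+1}^{2^d} ≤ |Σ|^{(2^d-1) t} C_{2m+1}`. Applying this along `m = 2^j n` and
dividing by `2^{d(j+1)}` telescopes: `log C_{n+1}` is at most `2^{-dJ} log C_{2^J n + 1}`, which
tends to `n^d L`, plus the boundary terms, whose series in `j` sums to exactly `q_d(n) log |Σ|`.
-/

open Filter Topology

theorem Nat.card_pow_le_of_injective_sigma {α β γ ι : Type*} [Finite α] [Fintype β]
    [Finite γ] [Finite ι] [Nonempty ι] (tr : α → β)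
    (Φ : (Σ b, ι → {a // tr a = b}) → γ) (hΦ : Function.Injective Φ) :
    Nat.card α ^ Nat.card ι ≤ Fintype.card β ^ (Nat.card ι - 1) * Nat.card γ := by
  have hι : Nat.card ι - 1 + 1 = Nat.card ι := Nat.sub_add_cancel Nat.card_pos
  calc Nat.card α ^ Nat.card ι
      = (∑ b, Nat.card {a // tr a = b}) ^ (Nat.card ι - 1 + 1) := by
        rw [hι, ← Nat.card_sigma, Nat.card_congr (Equiv.sigmaFiberEquiv tr)]
    _ ≤ Fintype.card β ^ (Nat.card ι - 1) * ∑ b, Nat.card {a // tr a = b} ^ Nat.card ι := by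
        rw [← hι]
        exact pow_sum_le_card_mul_sum_pow (fun _ _ => Nat.zero_le _) _
    _ = Fintype.card β ^ (Nat.card ι - 1) * Nat.card (Σ b, ι → {a // tr a = b}) := by
        simp only [Nat.card_sigma, Nat.card_fun]
    _ ≤ Fintype.card β ^ (Nat.card ι - 1) * Nat.card γ :=
        Nat.mul_le_mul_left _ (Nat.card_le_card_of_injective Φ hΦ)

section Steps

variable {d n : ℕ}

def IsUnitStep (k : Fin d) (x y : Fin d → Fin n) : Prop :=
  (∀ i, i ≠ k → x i = y i) ∧ (y k : ℕ) = x k + 1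

theorem isLocAdm_iff_isUnitStep {A : Type*} {F : Fin d → Set (A × A)}
    {P : (Fin d → Fin n) → A} :
    IsLocAdm d n F P ↔ ∀ k x y, IsUnitStep k x y → (P x, P y) ∉ F k := by
  constructor
  · rintro hP k x y ⟨hne, hk⟩
    have hy : y = Function.update x k ⟨x k + 1, hk ▸ (y k).isLt⟩ := by
      funext i
      rcases eq_or_ne i k with rfl | hik
      · exact Fin.ext (by simpa using hk)
      · rw [Function.update_of_ne hik, hne i hik]
    exact hy ▸ hP x k _
  · intro hP x k h
    exact hP k _ _ ⟨fun i hik => (Function.update_of_ne hik _ _).symm, by simp⟩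

end Steps

section Reflection

variable {d m : ℕ}

def farBoundary (d m : ℕ) : Finset (Fin d → Fin (m + 1)) :=
  (Fintype.piFinset fun _ => {Fin.last m}ᶜ)ᶜ

theorem mem_farBoundary {y : Fin d → Fin (m + 1)} :
    y ∈ farBoundary d m ↔ ∃ i, y i = Fin.last m := by
  simp [farBoundary]

theorem card_farBoundary : (farBoundary d m).card = (m + 1) ^ d - m ^ d := by
  simp [farBoundary, Finset.card_compl, Fintype.card_piFinset]

def foldPt (m : ℕ) (x : Fin d → Fin (2 * m + 1)) : Fin d → Fin (m + 1) :=
  fun k => ⟨min (x k) (2 * m - x k), by omega⟩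

def orthant (m : ℕ) (x : Fin d → Fin (2 * m + 1)) : Fin d → Bool :=
  fun k => decide (m < (x k : ℕ))

def unfoldPt (m : ℕ) (ε : Fin d → Bool) (y : Fin d → Fin (m + 1)) :
    Fin d → Fin (2 * m + 1) :=
  fun k => ⟨if ε k then 2 * m - y k else y k, by split <;> omega⟩

theorem foldPt_unfoldPt (ε : Fin d → Bool) (y : Fin d → Fin (m + 1)) :
    foldPt m (unfoldPt m ε y) = y := by
  funext k
  have := (y k).isLt
  ext
  simp only [foldPt, unfoldPt]
  split <;> omega

theorem orthant_unfoldPt_eq_or (ε : Fin d → Bool) (y : Fin d → Fin (m + 1)) (k : Fin d) :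
    orthant m (unfoldPt m ε y) k = ε k ∨ y k = Fin.last m := by
  have := (y k).isLt
  rw [Fin.ext_iff, Fin.val_last]
  simp only [orthant, unfoldPt]
  by_cases hε : ε k <;>
    simp only [hε, Bool.false_eq_true, ↓reduceIte, decide_eq_true_eq, decide_eq_false_iff_not,
      not_lt] <;> omega

theorem isUnitStep_foldPt {k : Fin d} {x y : Fin d → Fin (2 * m + 1)} (h : IsUnitStep k x y) :
    IsUnitStep k (foldPt m x) (foldPt m y) ∨ IsUnitStep k (foldPt m y) (foldPt m x) := by
  obtain ⟨hne, hk⟩ := h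
  have hne' : ∀ i, i ≠ k → foldPt m x i = foldPt m y i := fun i hi => by
    simp only [foldPt, hne i hi]
  have := (y k).isLt
  simp only [IsUnitStep, foldPt] at hne' ⊢
  rcases Nat.lt_or_ge (x k) m with hlt | hge
  · exact .inl ⟨hne', by omega⟩
  · exact .inr ⟨fun i hi => (hne' i hi).symm, by omega⟩

theorem orthant_eq_or_foldPt_eq_last {k : Fin d} {x y : Fin d → Fin (2 * m + 1)}
    (h : IsUnitStep k x y) : orthant m x = orthant m y ∨ foldPt m x k = Fin.last m := by
  obtain ⟨hne, hk⟩ := h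
  by_cases hm : (x k : ℕ) = m
  · exact .inr (Fin.ext (by simp only [foldPt, Fin.val_last]; omega))
  · refine .inl (funext fun i => ?_)
    rcases eq_or_ne i k with rfl | hi
    · simp only [orthant, hk]
      exact decide_eq_decide.mpr (by omega)
    · simp only [orthant, hne i hi]

end Reflection

section Gluing

variable {A : Type*} {d m : ℕ} {F : Fin d → Set (A × A)}

/-- The pattern on `[0, 2m]^d` whose restriction to each of the `2^d` orthants `ε` is the
reflected copy of `f ε`. -/
def reflectGlue (m : ℕ) (f : (Fin d → Bool) → (Fin d → Fin (m + 1)) → A) :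
    (Fin d → Fin (2 * m + 1)) → A :=
  fun x => f (orthant m x) (foldPt m x)

variable {f : (Fin d → Bool) → (Fin d → Fin (m + 1)) → A}

theorem reflectGlue_unfoldPt (hf : ∀ ε ε' y, y ∈ farBoundary d m → f ε y = f ε' y)
    (ε : Fin d → Bool) (y : Fin d → Fin (m + 1)) :
    reflectGlue m f (unfoldPt m ε y) = f ε y := by
  rw [reflectGlue, foldPt_unfoldPt]
  by_cases h : ∀ k, orthant m (unfoldPt m ε y) k = ε k
  · rw [funext h]
  · obtain ⟨k, hk⟩ := not_forall.1 h
    exact hf _ _ y (mem_farBoundary.2 ⟨k, (orthant_unfoldPt_eq_or ε y k).resolve_left hk⟩)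

theorem isLocAdm_reflectGlue (hF : ∀ (i : Fin d) (a b : A), (a, b) ∈ F i ↔ (b, a) ∈ F i)
    (hf : ∀ ε ε' y, y ∈ farBoundary d m → f ε y = f ε' y)
    (hadm : ∀ ε, IsLocAdm d (m + 1) F (f ε)) :
    IsLocAdm d (2 * m + 1) F (reflectGlue m f) := by
  rw [isLocAdm_iff_isUnitStep]
  intro k x y hxy
  -- if the orthants of `x` and `y` differ, `x` folds onto the far boundary, where all `f ε` agree
  have hx : reflectGlue m f x = f (orthant m y) (foldPt m x) := by
    rcases orthant_eq_or_foldPt_eq_last (m := m) hxy with h | h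
    · rw [reflectGlue, h]
    · exact hf _ _ _ (mem_farBoundary.2 ⟨k, h⟩)
  rw [hx, reflectGlue]
  rcases isUnitStep_foldPt (m := m) hxy with h | h
  · exact (isLocAdm_iff_isUnitStep.1 (hadm _)) k _ _ h
  · rw [hF]
    exact (isLocAdm_iff_isUnitStep.1 (hadm _)) k _ _ h

end Gluing

theorem patCount_pow_le {A : Type*} [Fintype A] {d : ℕ} {F : Fin d → Set (A × A)}
    (hF : ∀ (i : Fin d) (a b : A), (a, b) ∈ F i ↔ (b, a) ∈ F i) (m : ℕ) :
    patCount d F (m + 1) ^ 2 ^ d ≤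
      Fintype.card A ^ ((2 ^ d - 1) * ((m + 1) ^ d - m ^ d)) * patCount d F (2 * m + 1) := by
  classical
  let tr : {P // IsLocAdm d (m + 1) F P} → (farBoundary d m → A) := fun P y => P.1 y
  have hslice : ∀ (τ : farBoundary d m → A) (g : (Fin d → Bool) → {P // tr P = τ})
      ε ε' y, y ∈ farBoundary d m → (g ε).1.1 y = (g ε').1.1 y := fun τ g ε ε' y hy =>
    (congrFun (g ε).2 ⟨y, hy⟩).trans (congrFun (g ε').2 ⟨y, hy⟩).symm
  let Φ : (Σ τ, (Fin d → Bool) → {P // tr P = τ}) → {Q // IsLocAdm d (2 * m + 1) F Q} :=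
    fun p => ⟨reflectGlue m fun ε => (p.2 ε).1.1,
      isLocAdm_reflectGlue hF (hslice p.1 p.2) fun ε => (p.2 ε).1.2⟩
  have hΦ : Function.Injective Φ := by
    rintro ⟨τ, g⟩ ⟨τ', g'⟩ hgg'
    have hval : ∀ ε y, (g ε).1.1 y = (g' ε).1.1 y := fun ε y => by
      rw [← reflectGlue_unfoldPt (hslice τ g) ε y,
        ← reflectGlue_unfoldPt (hslice τ' g') ε y]
      exact congrFun (congrArg Subtype.val hgg') _
    obtain rfl : τ = τ' := funext fun y => by
      rw [← congrFun (g 0).2 y, ← congrFun (g' 0).2 y]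
      exact hval 0 y
    obtain rfl : g = g' := funext fun ε => Subtype.ext (Subtype.ext (funext (hval ε)))
    rfl
  have h := Nat.card_pow_le_of_injective_sigma tr Φ hΦ
  rwa [Nat.card_eq_fintype_card (α := Fin d → Bool), Fintype.card_fun, Fintype.card_bool,
    Fintype.card_fin, Fintype.card_fun, Fintype.card_coe, card_farBoundary, ← pow_mul,
    mul_comm ((m + 1) ^ d - m ^ d)] at h

theorem log_patCount_le {A : Type*} [Fintype A] {d : ℕ} {F : Fin d → Set (A × A)}
    (hF : ∀ (i : Fin d) (a b : A), (a, b) ∈ F i ↔ (b, a) ∈ F i) (m : ℕ) :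
    (2 : ℝ) ^ d * Real.log (patCount d F (m + 1)) ≤
      ((2 : ℝ) ^ d - 1) * (((m : ℝ) + 1) ^ d - (m : ℝ) ^ d) * Real.log (Fintype.card A) +
        Real.log (patCount d F (2 * m + 1)) := by
  have hexp : ((((2 ^ d - 1) * ((m + 1) ^ d - m ^ d) : ℕ)) : ℝ) =
      ((2 : ℝ) ^ d - 1) * (((m : ℝ) + 1) ^ d - (m : ℝ) ^ d) := by
    rw [Nat.cast_mul, Nat.cast_sub Nat.one_le_two_pow,
      Nat.cast_sub (Nat.pow_le_pow_left m.le_succ d)]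
    push_cast
    ring
  rcases (patCount d F (m + 1)).eq_zero_or_pos with h0 | hpos
  · -- `Real.log 0 = 0`, and every other term is nonnegative
    rw [h0, Nat.cast_zero, Real.log_zero, mul_zero, ← hexp]
    have := Real.log_natCast_nonneg (Fintype.card A)
    have := Real.log_natCast_nonneg (patCount d F (2 * m + 1))
    positivity
  · have hR := (pow_pos hpos (2 ^ d)).trans_le (patCount_pow_le hF m)
    have hlog := Real.log_le_log (by positivity) (Nat.cast_le (α := ℝ).2 (patCount_pow_le hF m))
    rw [Nat.cast_mul, Real.log_mul (by exact_mod_cast (Nat.pos_of_mul_pos_right hR).ne')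
      (by exact_mod_cast (Nat.pos_of_mul_pos_left hR).ne'), Nat.cast_pow, Nat.cast_pow,
      Real.log_pow, Real.log_pow, hexp] at hlog
    exact_mod_cast hlog

theorem add_one_pow_sub_pow {R : Type*} [CommRing R] (x : R) (d : ℕ) :
    (x + 1) ^ d - x ^ d = ∑ k ∈ Finset.range d, (d.choose k : R) * x ^ k := by
  rw [add_pow, Finset.sum_range_succ]
  simp [mul_comm]

theorem hasSum_qReal (d : ℕ) (x : ℝ) :
    HasSum (fun j : ℕ => ((2 : ℝ) ^ d - 1) * ((2 ^ j * x + 1) ^ d - (2 ^ j * x) ^ d) /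
      ((2 : ℝ) ^ d) ^ (j + 1)) (qReal d x) := by
  have hgeom : ∀ k ∈ Finset.range d, HasSum (fun j : ℕ =>
      ((2 : ℝ) ^ d - 1) * (d.choose k : ℝ) * x ^ k / 2 ^ d * ((2 : ℝ) ^ k / 2 ^ d) ^ j)
      (((2 : ℝ) ^ d - 1) * ((d.choose k : ℝ) / (2 ^ d - 2 ^ k) * x ^ k)) := by
    intro k hk
    have hkd : (2 : ℝ) ^ k < 2 ^ d := pow_lt_pow_right₀ one_lt_two (Finset.mem_range.1 hk)
    have hsub : (2 : ℝ) ^ d - 2 ^ k ≠ 0 := (sub_pos.2 hkd).ne'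
    have hval : ((2 : ℝ) ^ d - 1) * ((d.choose k : ℝ) / (2 ^ d - 2 ^ k) * x ^ k) =
        ((2 : ℝ) ^ d - 1) * (d.choose k : ℝ) * x ^ k / 2 ^ d * (1 - 2 ^ k / 2 ^ d)⁻¹ := by
      field_simp
    rw [hval]
    exact (hasSum_geometric_of_lt_one (by positivity)
      ((div_lt_one (by positivity)).2 hkd)).mul_left _
  rw [qReal, Finset.mul_sum]
  convert hasSum_sum hgeom using 2 with j
  rw [add_one_pow_sub_pow, Finset.mul_sum, Finset.sum_div]
  refine Finset.sum_congr rfl fun k _ => ?_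
  rw [mul_pow, div_pow, pow_succ]
  field_simp
  ring

theorem le_add_of_hasSum_of_le_add_succ {v w : ℕ → ℝ} {S V : ℝ}
    (hstep : ∀ j, v j ≤ w j + v (j + 1)) (hw : ∀ j, 0 ≤ w j) (hS : HasSum w S)
    (hV : Tendsto v atTop (𝓝 V)) : v 0 ≤ S + V := by
  refine ge_of_tendsto ((tendsto_const_nhds (x := S)).add hV) (Eventually.of_forall fun J => ?_)
  have htel := Finset.sum_range_sub' v J
  have hsum := Finset.sum_le_sum fun j (_ : j ∈ Finset.range J) => sub_le_iff_le_add.2 (hstep j)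
  have := sum_le_hasSum (Finset.range J) (fun j _ => hw j) hS
  linarith

theorem tendsto_div_pow_two_pow {g : ℕ → ℝ} {d n : ℕ} {L : ℝ} (hn : 1 ≤ n)
    (hg : Tendsto (fun N : ℕ => (1 / (N : ℝ) ^ d) * g N) atTop (𝓝 L)) :
    Tendsto (fun j : ℕ => g (2 ^ j * n + 1) / ((2 : ℝ) ^ d) ^ j) atTop
      (𝓝 ((n : ℝ) ^ d * L)) := by
  have hN : Tendsto (fun j : ℕ => 2 ^ j * n + 1) atTop atTop :=
    tendsto_atTop_mono (fun j => ((Nat.lt_two_pow_self.trans_le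
      (Nat.le_mul_of_pos_right _ hn)).le.trans (Nat.le_succ _))) tendsto_id
  have hratio : Tendsto (fun j : ℕ => ((2 ^ j * n + 1 : ℕ) : ℝ) / 2 ^ j) atTop (𝓝 n) := by
    convert tendsto_const_nhds.add (tendsto_pow_atTop_nhds_zero_of_lt_one (r := (1 / 2 : ℝ))
      (by norm_num) (by norm_num)) using 1
    · funext j
      push_cast
      rw [add_div, mul_div_cancel_left₀ _ (by positivity), one_div_pow]
    · simp
  convert (hratio.pow d).mul (hg.comp hN) using 1
  funext j
  have : (0 : ℝ) < ((2 ^ j * n + 1 : ℕ) : ℝ) := by positivity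
  rw [Function.comp_apply, div_pow, ← pow_mul, ← pow_mul, mul_comm j d]
  field_simp

theorem log_patCount_div_le {A : Type*} [Fintype A] {d : ℕ} {F : Fin d → Set (A × A)}
    (hF : ∀ (i : Fin d) (a b : A), (a, b) ∈ F i ↔ (b, a) ∈ F i) (n j : ℕ) :
    Real.log (patCount d F (2 ^ j * n + 1)) / ((2 : ℝ) ^ d) ^ j ≤
      ((2 : ℝ) ^ d - 1) * ((2 ^ j * n + 1) ^ d - (2 ^ j * n) ^ d) / ((2 : ℝ) ^ d) ^ (j + 1) *
          Real.log (Fintype.card A) +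
        Real.log (patCount d F (2 ^ (j + 1) * n + 1)) / ((2 : ℝ) ^ d) ^ (j + 1) := by
  have h := log_patCount_le hF (2 ^ j * n)
  rw [show 2 * (2 ^ j * n) + 1 = 2 ^ (j + 1) * n + 1 by ring] at h
  push_cast at h
  rw [pow_succ, div_mul_eq_mul_div, ← add_div, div_le_div_iff₀ (by positivity) (by positivity),
    mul_comm _ ((2 : ℝ) ^ d), ← mul_assoc, mul_comm _ ((2 : ℝ) ^ d)]
  exact mul_le_mul_of_nonneg_right h (by positivity)

open Filter in
theorem entropy_lower_bound_general
    {A : Type*} [Fintype A]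
    (d : ℕ) (F : Fin d → Set (A × A))
    (hF : ∀ (i : Fin d) (a b : A), (a, b) ∈ F i ↔ (b, a) ∈ F i)
    (L : ℝ)
    (hL : Tendsto (fun n : ℕ => (1 / (n : ℝ) ^ d) * Real.log (patCount d F n)) atTop
      (nhds L)) :
    ∀ n : ℕ, 1 ≤ n →
      (1 / (n : ℝ) ^ d) *
        (Real.log (patCount d F (n + 1)) - qReal d n * Real.log (Fintype.card A)) ≤ L := by
  intro n hn
  have hlayer : ∀ j : ℕ, 0 ≤ ((2 : ℝ) ^ d - 1) * ((2 ^ j * n + 1) ^ d - (2 ^ j * n) ^ d) /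
      ((2 : ℝ) ^ d) ^ (j + 1) * Real.log (Fintype.card A) := fun j => by
    have h2d : (0 : ℝ) ≤ 2 ^ d - 1 := sub_nonneg.2 (one_le_pow₀ one_le_two)
    have hcube : (0 : ℝ) ≤ (2 ^ j * n + 1) ^ d - (2 ^ j * n) ^ d :=
      sub_nonneg.2 (by gcongr; linarith)
    have := Real.log_natCast_nonneg (Fintype.card A)
    positivity
  have key := le_add_of_hasSum_of_le_add_succ (log_patCount_div_le hF n) hlayer
    ((hasSum_qReal d n).mul_right _) (tendsto_div_pow_two_pow hn hL)
  simp only [pow_zero, one_mul, div_one] at key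
  rw [one_div, inv_mul_le_iff₀ (by positivity)]
  linarith

open Filter in
/-- if `C_2 > 0` and `L = lim (1/n^d) log C_n`, then for every `n ≥ 1`,
`(1/n^d)(log C_{n+1} − q_d(n) log |Σ|) ≤ L`. -/
theorem entropy_lower_bound
    {A : Type*} [Fintype A] [Nonempty A]
    (d : ℕ) (hd : 1 ≤ d) (F : Fin d → Set (A × A))
    (hF : ∀ (i : Fin d) (a b : A), (a, b) ∈ F i ↔ (b, a) ∈ F i)
    (h2 : 0 < patCount d F 2) (L : ℝ)
    (hL : Tendsto (fun n : ℕ => (1 / (n : ℝ) ^ d) * Real.log (patCount d F n)) atTop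
      (nhds L)) :
    ∀ n : ℕ, 1 ≤ n →
      (1 / (n : ℝ) ^ d) *
        (Real.log (patCount d F (n + 1)) - qReal d n * Real.log (Fintype.card A)) ≤ L :=
  entropy_lower_bound_general d F hF L hL
end

section
/- Let d = 2. For every n ≥ 1, C_{2n+1} · |Σ|^{3(2n+1)} ≥ (C_{n+1})^4. -/
namespace PlanarKey

variable {A : Type*} [Fintype A]

/-- Admissibility of a rectangular pattern. -/
def Adm (Fh Fv : Set (A × A)) (w h : ℕ) (P : Fin w → Fin h → A) : Prop :=
  (∀ (i : Fin w) (j : Fin h) (hi : (i : ℕ) + 1 < w), (P i j, P ⟨(i : ℕ) + 1, hi⟩ j) ∉ Fh) ∧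
  (∀ (i : Fin w) (j : Fin h) (hj : (j : ℕ) + 1 < h), (P i j, P i ⟨(j : ℕ) + 1, hj⟩) ∉ Fv)

noncomputable def cnt (Fh Fv : Set (A × A)) (w h : ℕ) : ℕ :=
  Nat.card {P : Fin w → Fin h → A // Adm Fh Fv w h P}

/-- Transposition. -/
def transposeEquiv (Fh Fv : Set (A × A)) (w h : ℕ) :
    {P : Fin w → Fin h → A // Adm Fh Fv w h P} ≃
      {P : Fin h → Fin w → A // Adm Fv Fh h w P} where
  toFun P := ⟨fun j i => P.1 i j, fun i j hi => P.2.2 j i hi, fun i j hj => P.2.1 j i hj⟩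
  invFun P := ⟨fun i j => P.1 j i, fun i j hi => P.2.2 j i hi, fun i j hj => P.2.1 j i hj⟩
  left_inv P := rfl
  right_inv P := rfl

omit [Fintype A] in
lemma fin_mk_eq {n a b : ℕ} {ha : a < n} {hb : b < n} (h : a = b) :
    (⟨a, ha⟩ : Fin n) = ⟨b, hb⟩ := Fin.ext h

lemma cnt_transpose (Fh Fv : Set (A × A)) (w h : ℕ) :
    cnt Fh Fv w h = cnt Fv Fh h w :=
  Nat.card_congr (transposeEquiv Fh Fv w h)

section Glue

variable (Fh Fv : Set (A × A)) (m h : ℕ)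

def splitL (P : Fin (2 * m + 1) → Fin h → A) : Fin (m + 1) → Fin h → A :=
  fun i j => P ⟨(i : ℕ), by have := i.isLt; omega⟩ j

def splitR (P : Fin (2 * m + 1) → Fin h → A) : Fin (m + 1) → Fin h → A :=
  fun i j => P ⟨2 * m - (i : ℕ), by omega⟩ j

def glue (Q₁ Q₂ : Fin (m + 1) → Fin h → A) : Fin (2 * m + 1) → Fin h → A :=
  fun i j =>
    if hi : (i : ℕ) < m + 1 then Q₁ ⟨i, hi⟩ j
    else Q₂ ⟨2 * m - (i : ℕ), by omega⟩ j

variable (hsym : ∀ a b : A, (a, b) ∈ Fh ↔ (b, a) ∈ Fh)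

omit [Fintype A] in
lemma splitL_adm {P : Fin (2 * m + 1) → Fin h → A} (hP : Adm Fh Fv (2 * m + 1) h P) :
    Adm Fh Fv (m + 1) h (splitL m h P) := by
  constructor
  · intro i j hi
    have h1 : (i : ℕ) + 1 < 2 * m + 1 := by have := i.isLt; omega
    have key := hP.1 ⟨(i : ℕ), by omega⟩ j h1
    simpa [splitL] using key
  · intro i j hj
    exact hP.2 _ j hj

omit [Fintype A] in
include hsym in
lemma splitR_adm {P : Fin (2 * m + 1) → Fin h → A} (hP : Adm Fh Fv (2 * m + 1) h P) :
    Adm Fh Fv (m + 1) h (splitR m h P) := by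
  constructor
  · intro i j hi
    have hi' : (i : ℕ) < m := by omega
    have h0 : 2 * m - ((i : ℕ) + 1) < 2 * m + 1 := by omega
    have h1 : (2 * m - ((i : ℕ) + 1)) + 1 < 2 * m + 1 := by omega
    have key := hP.1 ⟨2 * m - ((i : ℕ) + 1), h0⟩ j h1
    rw [← hsym]
    simp only [splitR]
    have e2 : (⟨(2 * m - ((i : ℕ) + 1)) + 1, h1⟩ : Fin (2 * m + 1)) =
        ⟨2 * m - (i : ℕ), by omega⟩ := fin_mk_eq (by omega)
    rw [e2] at key
    exact key
  · intro i j hj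
    exact hP.2 _ j hj

omit [Fintype A] in
lemma split_boundary (P : Fin (2 * m + 1) → Fin h → A) :
    splitL m h P ⟨m, by omega⟩ = splitR m h P ⟨m, by omega⟩ := by
  funext j
  simp only [splitL, splitR]
  rw [fin_mk_eq (a := (m : ℕ)) (b := 2 * m - m) (ha := by omega) (hb := by omega) (by omega)]

omit [Fintype A] in
include hsym in
lemma glue_adm {Q₁ Q₂ : Fin (m + 1) → Fin h → A}
    (h₁ : Adm Fh Fv (m + 1) h Q₁) (h₂ : Adm Fh Fv (m + 1) h Q₂)
    (hb : Q₁ ⟨m, by omega⟩ = Q₂ ⟨m, by omega⟩) :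
    Adm Fh Fv (2 * m + 1) h (glue m h Q₁ Q₂) := by
  constructor
  · intro i j hi
    simp only [glue]
    split_ifs with h1 h2 h2
    · -- both left
      have h2' : (i : ℕ) + 1 < m + 1 := h2
      have key := h₁.1 ⟨(i : ℕ), h1⟩ j h2'
      simpa using key
    · -- i = m
      have him : (i : ℕ) = m := by omega
      have hm : 1 ≤ m := by omega
      have e1 : (⟨(i : ℕ), h1⟩ : Fin (m + 1)) = ⟨m, by omega⟩ := fin_mk_eq him
      rw [e1, hb, ← hsym]
      have hlt : (m - 1) + 1 < m + 1 := by omega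
      have key := h₂.1 ⟨m - 1, by omega⟩ j hlt
      have e3 : (⟨2 * m - ((i : ℕ) + 1), by omega⟩ : Fin (m + 1)) = ⟨m - 1, by omega⟩ :=
        fin_mk_eq (by omega)
      have e4 : (⟨m, by omega⟩ : Fin (m + 1)) = ⟨(m - 1) + 1, hlt⟩ :=
        fin_mk_eq (by omega)
      rw [e3, e4]
      exact key
    · omega
    · -- both right
      have hge : m + 1 ≤ (i : ℕ) := by omega
      have h0 : 2 * m - ((i : ℕ) + 1) < m + 1 := by omega
      have hlt : (2 * m - ((i : ℕ) + 1)) + 1 < m + 1 := by omega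
      have key := h₂.1 ⟨2 * m - ((i : ℕ) + 1), h0⟩ j hlt
      rw [← hsym]
      have e3 : (⟨2 * m - (i : ℕ), by omega⟩ : Fin (m + 1)) =
          ⟨(2 * m - ((i : ℕ) + 1)) + 1, hlt⟩ := fin_mk_eq (by omega)
      rw [e3]
      exact key
  · intro i j hj
    simp only [glue]
    split_ifs with h1
    · exact h₁.2 _ j hj
    · exact h₂.2 _ j hj

omit [Fintype A] in
lemma splitL_glue (Q₁ Q₂ : Fin (m + 1) → Fin h → A) :
    splitL m h (glue m h Q₁ Q₂) = Q₁ := by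
  funext i j
  simp only [splitL, glue]
  split_ifs with hc
  · exact congrFun (congrArg Q₁ (Fin.ext rfl)) j
  · exact absurd i.isLt hc

omit [Fintype A] in
lemma splitR_glue (Q₁ Q₂ : Fin (m + 1) → Fin h → A)
    (hb : Q₁ ⟨m, by omega⟩ = Q₂ ⟨m, by omega⟩) :
    splitR m h (glue m h Q₁ Q₂) = Q₂ := by
  funext i j
  have hi := i.isLt
  simp only [splitR, glue]
  split_ifs with hc
  · have hc2 : 2 * m - (i : ℕ) < m + 1 := hc
    have him : (i : ℕ) = m := by omega
    have e1 : (⟨2 * m - (i : ℕ), hc⟩ : Fin (m + 1)) = ⟨m, by omega⟩ := fin_mk_eq (by omega)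
    have e2 : i = (⟨m, by omega⟩ : Fin (m + 1)) := Fin.ext him
    rw [e1, hb, ← e2]
  · exact congrFun (congrArg Q₂ (Fin.ext (show 2 * m - (2 * m - (i : ℕ)) = (i : ℕ) by omega))) j

omit [Fintype A] in
lemma glue_split (P : Fin (2 * m + 1) → Fin h → A) :
    glue m h (splitL m h P) (splitR m h P) = P := by
  funext i j
  have hi := i.isLt
  simp only [glue, splitL, splitR]
  split_ifs with h1
  · exact congrFun (congrArg P (Fin.ext rfl)) j
  · have h1' : ¬ ((i : ℕ) < m + 1) := h1
    exact congrFun (congrArg P (Fin.ext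
      (show 2 * m - (2 * m - (i : ℕ)) = (i : ℕ) by omega))) j

end Glue

end PlanarKey

namespace PlanarKey

section Count

variable {A : Type*} [Fintype A] (Fh Fv : Set (A × A)) (m h : ℕ)
variable (hsym : ∀ a b : A, (a, b) ∈ Fh ↔ (b, a) ∈ Fh)

/-- small admissible patterns -/
local notation "S" => {Q : Fin (m + 1) → Fin h → A // Adm Fh Fv (m + 1) h Q}

noncomputable def bd (Q : S) : Fin h → A := Q.1 ⟨m, by omega⟩

include hsym in
lemma big_equiv_pairs :
    Nat.card {P : Fin (2 * m + 1) → Fin h → A // Adm Fh Fv (2 * m + 1) h P} =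
      Nat.card {p : S × S // bd Fh Fv m h p.1 = bd Fh Fv m h p.2} := by
  refine Nat.card_congr ?_
  refine
    { toFun := fun P => ⟨(⟨splitL m h P.1, splitL_adm Fh Fv m h P.2⟩,
        ⟨splitR m h P.1, splitR_adm Fh Fv m h hsym P.2⟩), ?_⟩
      invFun := fun p => ⟨glue m h p.1.1.1 p.1.2.1,
        glue_adm Fh Fv m h hsym p.1.1.2 p.1.2.2 p.2⟩
      left_inv := ?_
      right_inv := ?_ }
  · exact split_boundary m h P.1
  · intro P
    exact Subtype.ext (glue_split m h P.1)
  · rintro ⟨⟨Q₁, Q₂⟩, hbnd⟩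
    refine Subtype.ext (Prod.ext ?_ ?_)
    · exact Subtype.ext (splitL_glue m h Q₁.1 Q₂.1)
    · exact Subtype.ext (splitR_glue m h Q₁.1 Q₂.1 hbnd)

include hsym in
lemma cnt_double :
    cnt Fh Fv (m + 1) h ^ 2 ≤ Fintype.card A ^ h * cnt Fh Fv (2 * m + 1) h := by
  classical
  -- fiber counts
  set L : (Fin h → A) → ℕ := fun c => Nat.card {Q : S // bd Fh Fv m h Q = c} with hL
  have hsmall : cnt Fh Fv (m + 1) h = ∑ c : Fin h → A, L c := by
    rw [cnt]
    rw [Nat.card_congr (Equiv.sigmaFiberEquiv (bd Fh Fv m h)).symm]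
    rw [Nat.card_eq_fintype_card, Fintype.card_sigma]
    exact Finset.sum_congr rfl fun c _ => (Nat.card_eq_fintype_card).symm
  have hbig : cnt Fh Fv (2 * m + 1) h = ∑ c : Fin h → A, L c ^ 2 := by
    rw [cnt, big_equiv_pairs Fh Fv m h hsym]
    have e : {p : S × S // bd Fh Fv m h p.1 = bd Fh Fv m h p.2} ≃
        Σ c : Fin h → A, {Q : S // bd Fh Fv m h Q = c} × {Q : S // bd Fh Fv m h Q = c} :=
      { toFun := fun p => ⟨bd Fh Fv m h p.1.1, ⟨p.1.1, rfl⟩, ⟨p.1.2, p.2.symm⟩⟩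
        invFun := fun x => ⟨(x.2.1.1, x.2.2.1), by rw [x.2.1.2, x.2.2.2]⟩
        left_inv := fun p => rfl
        right_inv := by
          rintro ⟨c, ⟨Q₁, h1⟩, ⟨Q₂, h2⟩⟩
          subst h1
          simp
        }
    rw [Nat.card_congr e, Nat.card_eq_fintype_card, Fintype.card_sigma]
    refine Finset.sum_congr rfl fun c _ => ?_
    rw [Fintype.card_prod, sq, hL]
    simp only [Nat.card_eq_fintype_card]
  rw [hsmall, hbig]
  calc (∑ c : Fin h → A, L c) ^ 2
      ≤ (Finset.univ.card : ℕ) * ∑ c : Fin h → A, L c ^ 2 :=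
        sq_sum_le_card_mul_sum_sq
    _ = Fintype.card A ^ h * ∑ c : Fin h → A, L c ^ 2 := by
        rw [Finset.card_univ, Fintype.card_fun]
        simp

end Count

end PlanarKey

namespace PlanarKey

section Translate

variable {A : Type*} [Fintype A]

omit [Fintype A] in
lemma eta2 {α : Type*} (x : Fin 2 → α) : ![x 0, x 1] = x := by
  funext i; fin_cases i <;> rfl

omit [Fintype A] in
lemma update_vec0 {α : Type*} (a b v : α) : Function.update ![a, b] 0 v = ![v, b] := by
  funext i; fin_cases i <;> simp [Function.update]

omit [Fintype A] in
lemma update_vec1 {α : Type*} (a b v : α) : Function.update ![a, b] 1 v = ![a, v] := by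
  funext i; fin_cases i <;> simp [Function.update]

omit [Fintype A] in
lemma update_fun0 {α : Type*} (x : Fin 2 → α) (v : α) :
    Function.update x 0 v = ![v, x 1] := by
  funext i; fin_cases i <;> simp [Function.update]

omit [Fintype A] in
lemma update_fun1 {α : Type*} (x : Fin 2 → α) (v : α) :
    Function.update x 1 v = ![x 0, v] := by
  funext i; fin_cases i <;> simp [Function.update]

omit [Fintype A] in
lemma isLocAdm_iff (F : Fin 2 → Set (A × A)) (m : ℕ) (P : (Fin 2 → Fin m) → A) :
    IsLocAdm 2 m F P ↔ Adm (F 0) (F 1) m m (fun i j => P ![i, j]) := by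
  constructor
  · intro hP
    constructor
    · intro i j hi
      have key := hP ![i, j] 0 (show ((![i, j] 0 : Fin m) : ℕ) + 1 < m from hi)
      rw [update_vec0] at key
      exact key
    · intro i j hj
      have key := hP ![i, j] 1 (show ((![i, j] 1 : Fin m) : ℕ) + 1 < m from hj)
      rw [update_vec1] at key
      exact key
  · intro hQ x k h
    have hx : ![x 0, x 1] = x := eta2 x
    fin_cases k
    · have key := hQ.1 (x 0) (x 1) h
      simp only at key
      rw [hx] at key
      show (P x, P (Function.update x 0 ⟨(x 0 : ℕ) + 1, h⟩)) ∉ F 0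
      rw [update_fun0 x]
      exact key
    · have key := hQ.2 (x 0) (x 1) h
      simp only at key
      rw [hx] at key
      show (P x, P (Function.update x 1 ⟨(x 1 : ℕ) + 1, h⟩)) ∉ F 1
      rw [update_fun1 x]
      exact key

lemma patCount_eq_cnt (F : Fin 2 → Set (A × A)) (m : ℕ) :
    patCount 2 F m = cnt (F 0) (F 1) m m := by
  refine Nat.card_congr ?_
  refine Equiv.subtypeEquiv ?_ (fun P => ?_)
  · exact
      { toFun := fun P i j => P ![i, j]
        invFun := fun Q x => Q (x 0) (x 1)
        left_inv := fun P => by funext x; exact congrArg P (eta2 x)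
        right_inv := fun Q => rfl }
  · exact isLocAdm_iff F m P

end Translate

end PlanarKey

/-- planar case `d = 2`: `C_{2n+1} · |Σ|^{3(2n+1)} ≥ (C_{n+1})^4`. -/
theorem planar_key_bound
    {A : Type*} [Fintype A] [Nonempty A]
    (F : Fin 2 → Set (A × A))
    (hF : ∀ (i : Fin 2) (a b : A), (a, b) ∈ F i ↔ (b, a) ∈ F i)
    (n : ℕ) (hn : 1 ≤ n) :
    (patCount 2 F (n + 1)) ^ 4 ≤
      patCount 2 F (2 * n + 1) * (Fintype.card A) ^ (3 * (2 * n + 1)) := by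
  classical
  open PlanarKey in
  set a := Fintype.card A with ha
  have ha1 : 1 ≤ a := Fintype.card_pos
  set X := cnt (F 0) (F 1) (n + 1) (n + 1) with hX
  set Y := cnt (F 0) (F 1) (2 * n + 1) (n + 1) with hY
  set Z := cnt (F 0) (F 1) (2 * n + 1) (2 * n + 1) with hZ
  have h1 : patCount 2 F (n + 1) = X := patCount_eq_cnt F (n + 1)
  have h2 : patCount 2 F (2 * n + 1) = Z := patCount_eq_cnt F (2 * n + 1)
  have d1 : X ^ 2 ≤ a ^ (n + 1) * Y :=
    cnt_double (F 0) (F 1) n (n + 1) (hF 0)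
  have d2 : Y ^ 2 ≤ a ^ (2 * n + 1) * Z := by
    have t1 : Y = cnt (F 1) (F 0) (n + 1) (2 * n + 1) := cnt_transpose _ _ _ _
    have t2 : cnt (F 1) (F 0) (2 * n + 1) (2 * n + 1) = Z := cnt_transpose _ _ _ _
    rw [t1, ← t2]
    exact cnt_double (F 1) (F 0) n (2 * n + 1) (hF 1)
  have main : X ^ 4 ≤ a ^ (4 * n + 3) * Z := by
    calc X ^ 4 = (X ^ 2) ^ 2 := by ring
      _ ≤ (a ^ (n + 1) * Y) ^ 2 := Nat.pow_le_pow_left d1 2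
      _ = a ^ (2 * n + 2) * Y ^ 2 := by ring
      _ ≤ a ^ (2 * n + 2) * (a ^ (2 * n + 1) * Z) := Nat.mul_le_mul_left _ d2
      _ = a ^ (4 * n + 3) * Z := by ring
  rw [h1, h2]
  calc X ^ 4 ≤ a ^ (4 * n + 3) * Z := main
    _ ≤ a ^ (3 * (2 * n + 1)) * Z := by
        have : a ^ (4 * n + 3) ≤ a ^ (3 * (2 * n + 1)) :=
          Nat.pow_le_pow_right ha1 (by omega)
        exact Nat.mul_le_mul_right _ this
    _ = Z * a ^ (3 * (2 * n + 1)) := Nat.mul_comm _ _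
end

section
/- For every n ≥ 2, C_n > 0 if and only if C_2 > 0. (Consequently, the counts C_n for n ≥ 2 are either all zero or all positive.) -/
/-- for `n ≥ 2`, `C_n > 0` iff `C_2 > 0` (so the `C_n`, `n ≥ 2`, are either
all zero or all positive). -/
theorem patCount_pos_iff
    {A : Type*} [Fintype A] [Nonempty A]
    (d : ℕ) (hd : 1 ≤ d) (F : Fin d → Set (A × A))
    (hF : ∀ (i : Fin d) (a b : A), (a, b) ∈ F i ↔ (b, a) ∈ F i)
    (n : ℕ) (hn : 2 ≤ n) :
    0 < patCount d F n ↔ 0 < patCount d F 2 := by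
  rw [patCount, patCount, Nat.card_pos_iff, Nat.card_pos_iff]
  constructor
  · rintro ⟨⟨P, hP⟩, -⟩
    refine ⟨⟨⟨fun x => P (fun k => ⟨x k, lt_of_lt_of_le (x k).isLt hn⟩), ?_⟩⟩, inferInstance⟩
    intro x k h
    have h' : ((x k : ℕ)) + 1 < n := lt_of_lt_of_le h hn
    have key := hP (fun k' => ⟨x k', lt_of_lt_of_le (x k').isLt hn⟩) k h'
    have heq : (fun k1 => (⟨((Function.update x k ⟨(x k : ℕ) + 1, h⟩ : Fin d → Fin 2) k1 : ℕ),
        lt_of_lt_of_le ((Function.update x k ⟨(x k : ℕ) + 1, h⟩ : Fin d → Fin 2) k1).isLt hn⟩ : Fin n))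
        = Function.update (fun k' => ⟨x k', lt_of_lt_of_le (x k').isLt hn⟩) k ⟨(x k : ℕ) + 1, h'⟩ := by
      funext j
      by_cases hj : j = k
      · subst hj; simp [Function.update]
      · simp [Function.update, hj]
    beta_reduce
    rw [heq]
    exact key
  · rintro ⟨⟨Q, hQ⟩, -⟩
    refine ⟨⟨⟨fun x => Q (fun k => ⟨(x k : ℕ) % 2, Nat.mod_lt _ two_pos⟩), ?_⟩⟩, inferInstance⟩
    intro x k h
    set y : Fin d → Fin 2 := fun k' => ⟨(x k' : ℕ) % 2, Nat.mod_lt _ two_pos⟩ with hy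
    have hupd : ∀ (m : ℕ) (hm : m < 2),
        ((x k : ℕ) + 1) % 2 = m →
        (fun k' => (⟨((Function.update x k ⟨(x k : ℕ) + 1, h⟩ : Fin d → Fin n) k' : ℕ) % 2,
            Nat.mod_lt _ two_pos⟩ : Fin 2)) = Function.update y k ⟨m, hm⟩ := by
      intro m hm hmod
      funext j
      by_cases hj : j = k
      · subst hj; simp [Function.update, hmod]
      · simp [Function.update, hj, hy]
    rcases Nat.mod_two_eq_zero_or_one (x k : ℕ) with h0 | h1
    · have hyk : (y k : ℕ) = 0 := by simp [hy, h0]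
      have h2 : ((y k : ℕ)) + 1 < 2 := by omega
      have hmod : ((x k : ℕ) + 1) % 2 = 1 := by omega
      have hone : (⟨1, one_lt_two⟩ : Fin 2) = ⟨(y k : ℕ) + 1, h2⟩ := Fin.ext (show 1 = (y k : ℕ) + 1 by omega)
      have hfix : Function.update y k ⟨1, one_lt_two⟩
          = Function.update y k ⟨(y k : ℕ) + 1, h2⟩ :=
        congrArg (fun t => Function.update y k t) hone
      beta_reduce
      rw [hupd 1 one_lt_two hmod, ← hy, hfix]
      exact hQ y k h2
    · set z : Fin d → Fin 2 := Function.update y k ⟨0, two_pos⟩ with hz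
      have hzk : (z k : ℕ) = 0 := by simp [hz]
      have h2 : ((z k : ℕ)) + 1 < 2 := by omega
      have hQz := hQ z k h2
      have hyz : y = Function.update z k ⟨(z k : ℕ) + 1, h2⟩ := by
        funext j
        by_cases hj : j = k
        · subst hj
          simp only [hz, Function.update_self]
          exact Fin.ext (by simp [hy, h1])
        · simp [hz, Function.update, hj]
      have hmod : ((x k : ℕ) + 1) % 2 = 0 := by omega
      beta_reduce
      rw [hupd 0 two_pos hmod, ← hz, ← hy, hyz]
      intro hmem
      exact hQz ((hF k _ _).mp hmem)
end

section
/- If C_2 > 0, i.e., there exists a locally admissible pattern on [1,2]^d, then there exists a globally admissible configuration on Z^d (the symmetric nearest-neighbor subshift is nonempty). -/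
/-- if there is a locally admissible pattern on `[1,2]^d`, then the symmetric
nearest-neighbor subshift is nonempty: there is a globally admissible configuration. -/
theorem subshift_nonempty_of_patCount_two_pos
    {A : Type*} [Fintype A] [Nonempty A]
    (d : ℕ) (hd : 1 ≤ d) (F : Fin d → Set (A × A))
    (hF : ∀ (i : Fin d) (a b : A), (a, b) ∈ F i ↔ (b, a) ∈ F i)
    (h2 : 0 < patCount d F 2) :
    ∃ x : (Fin d → ℤ) → A, IsGlobAdm d F x := by
  have hne : Nonempty {P : (Fin d → Fin 2) → A // IsLocAdm d 2 F P} :=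
    (Nat.card_pos_iff.mp h2).1
  obtain ⟨P, hP⟩ := hne
  -- fold ℤ to Fin 2 via mod 2
  set g : ℤ → Fin 2 := fun m => ⟨(m % 2).toNat, by
    have h0 : 0 ≤ m % 2 := Int.emod_nonneg m (by norm_num)
    have h1 : m % 2 < 2 := Int.emod_lt_of_pos m (by norm_num)
    omega⟩ with hg
  refine ⟨fun v => P (fun k => g (v k)), ?_⟩
  intro v k
  have hupd : (fun j => g ((Function.update v k (v k + 1)) j))
      = Function.update (fun j => g (v j)) k (g (v k + 1)) := by
    funext j
    by_cases hj : j = k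
    · subst hj; simp
    · simp [Function.update_of_ne hj]
  simp only [hupd]
  set y : Fin d → Fin 2 := fun j => g (v j) with hy
  have hmod : v k % 2 = 0 ∨ v k % 2 = 1 := by omega
  rcases hmod with h0 | h1
  · have hyk : y k = ⟨0, by norm_num⟩ := by
      simp [hy, hg, h0]
    have hgv : g (v k + 1) = ⟨1, by norm_num⟩ := by
      have : (v k + 1) % 2 = 1 := by omega
      simp [hg, this]
    have hyk0 : (y k : ℕ) = 0 := by simp [hy, hg]; omega
    have h' : (y k : ℕ) + 1 < 2 := by omega
    have hthis := hP y k h'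
    have heq : (⟨(y k : ℕ) + 1, h'⟩ : Fin 2) = g (v k + 1) := by
      apply Fin.ext
      rw [hgv]
      simp [hy, hg]
      omega
    rw [heq] at hthis
    exact hthis
  · have hyk : y k = ⟨1, by norm_num⟩ := by
      simp [hy, hg, h1]
    have hgv : g (v k + 1) = ⟨0, by norm_num⟩ := by
      have : (v k + 1) % 2 = 0 := by omega
      simp [hg, this]
    set z : Fin d → Fin 2 := Function.update y k ⟨0, by norm_num⟩ with hz
    have hzk : (z k : ℕ) = 0 := by simp [hz]
    have h' : (z k : ℕ) + 1 < 2 := by omega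
    have hadm := hP z k h'
    have heq : Function.update z k ⟨(z k : ℕ) + 1, h'⟩ = y := by
      funext j
      by_cases hj : j = k
      · subst hj
        simp only [Function.update_self]
        apply Fin.ext
        rw [hyk]
        simp [hzk]
      · simp [hz, Function.update_of_ne hj]
    have hzy : Function.update y k (g (v k + 1)) = z := by rw [hgv]
    intro hmem
    apply hadm
    rw [heq]
    rw [hzy] at hmem
    exact (hF k _ _).mp hmem
end

section
/- Assume C_2 > 0. For every n ≥ 2, the gap between the upper and lower bounds satisfies 0 ≤ (1/n^d) · log C_n − (1/n^d) · (log C_{n+1} − q_d(n) · log |Σ|) ≤ (q_d(n) · log |Σ|) / n^d, where q_d(n) = (2^d − 1) · Σ_{k=0}^{d−1} (binom(d,k)/(2^d − 2^k)) · n^k. -/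
set_option linter.unusedSectionVars false

lemma comp_update' {α : Type*} [DecidableEq α] {α' β : Type*} (f : α' → β) (g : α → α')
    (i : α) (v : α') :
    (fun j => f (Function.update g i v j)) = Function.update (fun j => f (g j)) i (f v) := by
  funext j
  rcases eq_or_ne j i with rfl | hj
  · simp
  · simp [Function.update_of_ne hj]

section aux
variable {A : Type*} [Fintype A] {d : ℕ} (F : Fin d → Set (A × A))

lemma res_adm {n : ℕ} {P : (Fin d → Fin (n+1)) → A}
    (hP : IsLocAdm d (n+1) F P) :
    IsLocAdm d n F (fun x => P (fun i => (x i).castSucc)) := by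
  intro x k h
  have h' : (((x k).castSucc : Fin (n+1)) : ℕ) + 1 < n + 1 := by
    simp only [Fin.coe_castSucc]; omega
  have key := hP (fun i => (x i).castSucc) k h'
  have hupd : (fun i => ((Function.update x k ⟨(x k : ℕ) + 1, h⟩) i).castSucc)
      = Function.update (fun i => (x i).castSucc) k
          ⟨(((x k).castSucc : Fin (n+1)) : ℕ) + 1, h'⟩ := by
    rw [comp_update' Fin.castSucc x k]
    have hv : (⟨(x k : ℕ) + 1, h⟩ : Fin n).castSucc
        = (⟨(((x k).castSucc : Fin (n+1)) : ℕ) + 1, h'⟩ : Fin (n+1)) := Fin.ext (by simp)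
    rw [hv]
  simpa [hupd] using key

/-- The squish map used for the monotonicity injection. -/
def squish (n : ℕ) (hn : 2 ≤ n) : Fin (n+1) → Fin n :=
  fun j => if h : (j : ℕ) < n then ⟨j, h⟩ else ⟨n-2, by omega⟩

lemma squish_castSucc {n : ℕ} (hn : 2 ≤ n) (j : Fin n) :
    squish n hn j.castSucc = j := by
  simp [squish, Fin.ext_iff]

lemma squish_adm (hF : ∀ (i : Fin d) (a b : A), (a, b) ∈ F i ↔ (b, a) ∈ F i)
    {n : ℕ} (hn : 2 ≤ n) {P : (Fin d → Fin n) → A} (hP : IsLocAdm d n F P) :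
    IsLocAdm d (n+1) F (fun x => P (fun i => squish n hn (x i))) := by
  intro x k h
  set y : Fin d → Fin n := fun i => squish n hn (x i) with hy
  have hupd : ∀ (v : Fin (n+1)), (fun i => squish n hn ((Function.update x k v) i))
      = Function.update y k (squish n hn v) := fun v => comp_update' (squish n hn) x k v
  by_cases h1 : (x k : ℕ) + 1 < n
  · have hxk : (x k : ℕ) < n := by omega
    have hyk : (y k : ℕ) = (x k : ℕ) := by
      show ((squish n hn (x k) : Fin n) : ℕ) = _
      unfold squish; rw [dif_pos hxk]
    have hyk1 : (y k : ℕ) + 1 < n := by omega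
    have key := hP y k hyk1
    have hv : squish n hn ⟨(x k : ℕ) + 1, h⟩ = ⟨(y k : ℕ) + 1, hyk1⟩ := by
      apply Fin.ext
      show ((squish n hn ⟨(x k : ℕ) + 1, h⟩ : Fin n) : ℕ) = _
      unfold squish; rw [dif_pos (show ((⟨(x k : ℕ) + 1, h⟩ : Fin (n+1)) : ℕ) < n from h1)]
      simp [hyk]
    simp only [hupd, hv]
    exact key
  · -- x k = n - 1
    have hxk : (x k : ℕ) = n - 1 := by omega
    have hxkn : (x k : ℕ) < n := by omega
    have hyk : (y k : ℕ) = n - 1 := by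
      show ((squish n hn (x k) : Fin n) : ℕ) = _
      unfold squish; rw [dif_pos hxkn]; exact hxk
    have hv : squish n hn ⟨(x k : ℕ) + 1, h⟩ = ⟨n-2, by omega⟩ := by
      apply Fin.ext
      show ((squish n hn ⟨(x k : ℕ) + 1, h⟩ : Fin n) : ℕ) = _
      unfold squish
      rw [dif_neg (show ¬ ((⟨(x k : ℕ) + 1, h⟩ : Fin (n+1)) : ℕ) < n from h1)]
    set z : Fin d → Fin n := Function.update y k ⟨n-2, by omega⟩ with hz
    have hzk : (z k : ℕ) = n - 2 := by simp [hz]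
    have hzk1 : (z k : ℕ) + 1 < n := by omega
    have key := hP z k hzk1
    have hyz : Function.update z k ⟨(z k : ℕ) + 1, hzk1⟩ = y := by
      funext i
      rcases eq_or_ne i k with rfl | hik
      · rw [Function.update_self]
        apply Fin.ext
        show (z i : ℕ) + 1 = (y i : ℕ)
        omega
      · rw [Function.update_of_ne hik, hz, Function.update_of_ne hik]
    rw [hyz] at key
    simp only [hupd, hv]
    rw [← hz]
    intro hmem
    exact key ((hF k _ _).mp hmem)

lemma patCount_mono_s17 (hF : ∀ (i : Fin d) (a b : A), (a, b) ∈ F i ↔ (b, a) ∈ F i)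
    {n : ℕ} (hn : 2 ≤ n) : patCount d F n ≤ patCount d F (n+1) := by
  apply Nat.card_le_card_of_injective
    (fun P : {P : (Fin d → Fin n) → A // IsLocAdm d n F P} =>
      (⟨fun x => P.1 (fun i => squish n hn (x i)), squish_adm F hF hn P.2⟩ :
        {Q : (Fin d → Fin (n+1)) → A // IsLocAdm d (n+1) F Q}))
  intro P P' hPP
  ext x
  have := congrArg Subtype.val hPP
  have h2 := congrFun this (fun i => (x i).castSucc)
  simpa [squish_castSucc] using h2

lemma card_boundary (d n : ℕ) :
    Fintype.card {x : Fin d → Fin (n+1) // ¬ ∀ k, ((x k : ℕ) < n)} = (n+1)^d - n^d := by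
  classical
  rw [Fintype.card_subtype_compl (fun x : Fin d → Fin (n+1) => ∀ k, ((x k : ℕ) < n))]
  have e : {x : Fin d → Fin (n+1) // ∀ k, ((x k : ℕ) < n)} ≃ (Fin d → Fin n) :=
    { toFun := fun x i => ⟨(x.1 i : ℕ), x.2 i⟩
      invFun := fun y => ⟨fun i => (y i).castSucc, fun k => by simp⟩
      left_inv := fun x => by ext i; simp
      right_inv := fun y => by ext i; simp }
  rw [Fintype.card_congr e]
  simp

lemma patCount_upper {n : ℕ} :
    patCount d F (n+1) ≤ patCount d F n * Fintype.card A ^ ((n+1)^d - n^d) := by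
  classical
  have key : patCount d F (n+1) ≤
      Nat.card ({Q : (Fin d → Fin n) → A // IsLocAdm d n F Q} ×
        ({x : Fin d → Fin (n+1) // ¬ ∀ k, ((x k : ℕ) < n)} → A)) := by
    apply Nat.card_le_card_of_injective
      (fun P : {P : (Fin d → Fin (n+1)) → A // IsLocAdm d (n+1) F P} =>
        (⟨fun x => P.1 (fun i => (x i).castSucc), res_adm F P.2⟩, fun b => P.1 b.1))
    intro P P' hPP
    have h1 := congrArg (Subtype.val ∘ Prod.fst) hPP
    have h2 := congrArg Prod.snd hPP
    ext x
    by_cases hx : ∀ k, ((x k : ℕ) < n)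
    · have := congrFun h1 (fun i => ⟨(x i : ℕ), hx i⟩)
      simpa [Function.comp, show (fun i => ((⟨(x i : ℕ), hx i⟩ : Fin n)).castSucc) = x from
        funext fun i => Fin.ext rfl] using this
    · exact congrFun h2 ⟨x, hx⟩
  rwa [Nat.card_prod, Nat.card_fun, Nat.card_eq_fintype_card
      (α := {x : Fin d → Fin (n+1) // ¬ ∀ k, ((x k : ℕ) < n)}), card_boundary,
    Nat.card_eq_fintype_card (α := A)] at key

lemma patCount_pos (hF : ∀ (i : Fin d) (a b : A), (a, b) ∈ F i ↔ (b, a) ∈ F i)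
    (h2 : 0 < patCount d F 2) {n : ℕ} (hn : 2 ≤ n) : 0 < patCount d F n := by
  induction n, hn using Nat.le_induction with
  | base => exact h2
  | succ m hm ih => exact ih.trans_le (patCount_mono_s17 F hF hm)

end aux

lemma B_le_q (d : ℕ) (n : ℕ) :
    (((n+1)^d - n^d : ℕ) : ℝ) ≤ qReal d n := by
  have hle : n^d ≤ (n+1)^d := Nat.pow_le_pow_left (Nat.le_succ n) d
  have hcast : (((n+1)^d - n^d : ℕ) : ℝ) = ((n : ℝ) + 1)^d - (n : ℝ)^d := by
    rw [Nat.cast_sub hle]; push_cast; ring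
  rw [hcast]
  have hb : ((n : ℝ) + 1)^d - (n : ℝ)^d
      = ∑ k ∈ Finset.range d, (n : ℝ)^k * (d.choose k : ℝ) := by
    have := add_pow (n : ℝ) 1 d
    rw [Finset.sum_range_succ] at this
    simp only [one_pow, mul_one, Nat.choose_self, Nat.cast_one] at this
    linarith [this]
  rw [hb, qReal, Finset.mul_sum]
  apply Finset.sum_le_sum
  intro k hk
  have hkd : k < d := Finset.mem_range.mp hk
  have h2k : (2 : ℝ)^k < 2^d := pow_lt_pow_right₀ one_lt_two hkd
  have h2k1 : (1 : ℝ) ≤ 2^k := one_le_pow₀ (by norm_num)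
  have hpos : (0 : ℝ) < 2^d - 2^k := by linarith
  have hone : (1 : ℝ) ≤ (2^d - 1) / (2^d - 2^k) := by
    rw [le_div_iff₀ hpos]; linarith
  calc (n : ℝ)^k * (d.choose k : ℝ) = 1 * ((d.choose k : ℝ) * (n : ℝ)^k) := by ring
    _ ≤ ((2^d - 1) / (2^d - 2^k)) * ((d.choose k : ℝ) * (n : ℝ)^k) := by
        apply mul_le_mul_of_nonneg_right hone (by positivity)
    _ = (2^d - 1) * ((d.choose k : ℝ) / (2^d - 2^k) * (n : ℝ)^k) := by ring

/-- if `C_2 > 0`, then for `n ≥ 2` the gap between the upper bound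
`(1/n^d) log C_n` and the lower bound `(1/n^d)(log C_{n+1} − q_d(n) log |Σ|)` is
nonnegative and at most `q_d(n) log |Σ| / n^d`. -/
theorem gap_bound
    {A : Type*} [Fintype A] [Nonempty A]
    (d : ℕ) (hd : 1 ≤ d) (F : Fin d → Set (A × A))
    (hF : ∀ (i : Fin d) (a b : A), (a, b) ∈ F i ↔ (b, a) ∈ F i)
    (h2 : 0 < patCount d F 2) :
    ∀ n : ℕ, 2 ≤ n →
      0 ≤ (1 / (n : ℝ) ^ d) * Real.log (patCount d F n) -
          (1 / (n : ℝ) ^ d) *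
            (Real.log (patCount d F (n + 1)) - qReal d n * Real.log (Fintype.card A)) ∧
      (1 / (n : ℝ) ^ d) * Real.log (patCount d F n) -
          (1 / (n : ℝ) ^ d) *
            (Real.log (patCount d F (n + 1)) - qReal d n * Real.log (Fintype.card A)) ≤
        qReal d n * Real.log (Fintype.card A) / (n : ℝ) ^ d := by
  intro n hn
  have hc1 : (1 : ℝ) ≤ (Fintype.card A : ℝ) := by exact_mod_cast Fintype.card_pos
  have hlc : 0 ≤ Real.log (Fintype.card A) := Real.log_nonneg hc1
  have hCn : 0 < patCount d F n := patCount_pos F hF h2 hn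
  have hCn1 : 0 < patCount d F (n + 1) := patCount_pos F hF h2 (by omega)
  have hCnR : (0 : ℝ) < (patCount d F n : ℝ) := by exact_mod_cast hCn
  have hCn1R : (0 : ℝ) < (patCount d F (n + 1) : ℝ) := by exact_mod_cast hCn1
  set X := Real.log (patCount d F n) with hX
  set Y := Real.log (patCount d F (n + 1)) with hY
  set Q := qReal d n * Real.log (Fintype.card A) with hQ
  have hlog1 : X ≤ Y := by
    apply Real.log_le_log hCnR
    exact_mod_cast patCount_mono_s17 F hF hn
  have hlog2 : Y ≤ X + Q := by
    have hup : (patCount d F (n + 1) : ℝ)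
        ≤ (patCount d F n : ℝ) * (Fintype.card A : ℝ) ^ ((n+1)^d - n^d) := by
      exact_mod_cast patCount_upper F (n := n)
    have h1 : Y ≤ X + (((n+1)^d - n^d : ℕ) : ℝ) * Real.log (Fintype.card A) := by
      calc Y ≤ Real.log ((patCount d F n : ℝ) * (Fintype.card A : ℝ) ^ ((n+1)^d - n^d)) :=
            Real.log_le_log hCn1R hup
        _ = X + (((n+1)^d - n^d : ℕ) : ℝ) * Real.log (Fintype.card A) := by
            rw [Real.log_mul (ne_of_gt hCnR) (by positivity), Real.log_pow]
    have h2' : (((n+1)^d - n^d : ℕ) : ℝ) * Real.log (Fintype.card A) ≤ Q :=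
      mul_le_mul_of_nonneg_right (B_le_q d n) hlc
    linarith
  have hnR : (0 : ℝ) < (n : ℝ) := by exact_mod_cast (by omega : 0 < n)
  have hnd : (0 : ℝ) < (n : ℝ) ^ d := by positivity
  constructor
  · rw [show (1 / (n : ℝ) ^ d) * X - (1 / (n : ℝ) ^ d) * (Y - Q)
        = (1 / (n : ℝ) ^ d) * (X - (Y - Q)) by ring]
    exact mul_nonneg (by positivity) (by linarith)
  · rw [show (1 / (n : ℝ) ^ d) * X - (1 / (n : ℝ) ^ d) * (Y - Q)
        = (X - Y + Q) / (n : ℝ) ^ d by ring]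
    gcongr
    linarith
end

section
/- Assume C_2 > 0 and let L = lim_{n→∞} (1/n^d) · log C_n. Then the sequence of lower bounds converges to L: lim_{n→∞} (1/n^d) · (log C_{n+1} − q_d(n) · log |Σ|) = L, where q_d(n) = (2^d − 1) · Σ_{k=0}^{d−1} (binom(d,k)/(2^d − 2^k)) · n^k. In particular, L is the limit of a nondecreasing-in-doubling, explicitly computable sequence of lower bounds together with the upper bounds (1/n^d) · log C_n. -/
/-! Passing from `n` to `n + 1` rescales the normalisation by `(1 + 1/n)^d → 1`, and `q_d` has
degree `d - 1`, so `q_d(n) / n^d → 0`. -/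

open Filter

theorem tendsto_one_div_pow_mul_succ {d : ℕ} {f : ℕ → ℝ} {L : ℝ}
    (hf : Tendsto (fun n : ℕ => (1 / (n : ℝ) ^ d) * f n) atTop (nhds L)) :
    Tendsto (fun n : ℕ => (1 / (n : ℝ) ^ d) * f (n + 1)) atTop (nhds L) := by
  have hshift : Tendsto (fun n : ℕ => (1 / ((n + 1 : ℕ) : ℝ) ^ d) * f (n + 1)) atTop
      (nhds L) :=
    hf.comp (tendsto_add_atTop_nat 1)
  have hratio : Tendsto (fun n : ℕ => ((1 : ℝ) + 1 / (n : ℝ)) ^ d) atTop (nhds 1) := by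
    simpa using
      ((tendsto_const_nhds (x := (1 : ℝ))).add tendsto_one_div_atTop_nhds_zero_nat).pow d
  refine (one_mul L ▸ hratio.mul hshift).congr' ?_
  filter_upwards [eventually_gt_atTop 0] with n hn
  have hn' : (n : ℝ) ≠ 0 := Nat.cast_ne_zero.mpr hn.ne'
  push_cast
  rw [one_add_div hn', div_pow]
  field_simp

theorem tendsto_one_div_pow_mul_qReal (d : ℕ) :
    Tendsto (fun n : ℕ => (1 / (n : ℝ) ^ d) * qReal d n) atTop (nhds 0) := by
  have hterm : ∀ k ∈ Finset.range d, Tendsto (fun n : ℕ =>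
      ((2 : ℝ) ^ d - 1) * ((d.choose k : ℝ) / (2 ^ d - 2 ^ k)) * ((n : ℝ) ^ k / (n : ℝ) ^ d))
      atTop (nhds 0) := fun k hk => by
    simpa using ((tendsto_pow_div_pow_atTop_zero (Finset.mem_range.mp hk)).comp
      tendsto_natCast_atTop_atTop).const_mul (((2 : ℝ) ^ d - 1) * (d.choose k / (2 ^ d - 2 ^ k)))
  have hsum := tendsto_finsetSum _ hterm
  rw [Finset.sum_const_zero] at hsum
  refine hsum.congr fun n => ?_
  simp only [qReal, Finset.mul_sum]
  exact Finset.sum_congr rfl fun k _ => by ring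

open Filter in
theorem lower_bounds_tendsto_entropy_general
    {A : Type*} [Fintype A]
    (d : ℕ) (F : Fin d → Set (A × A))
    (L : ℝ)
    (hL : Tendsto (fun n : ℕ => (1 / (n : ℝ) ^ d) * Real.log (patCount d F n)) atTop
      (nhds L)) :
    Tendsto (fun n : ℕ => (1 / (n : ℝ) ^ d) *
        (Real.log (patCount d F (n + 1)) - qReal d n * Real.log (Fintype.card A)))
      atTop (nhds L) := by
  have hq := (tendsto_one_div_pow_mul_qReal d).mul_const (Real.log (Fintype.card A))
  rw [zero_mul] at hq
  have hdiff := (tendsto_one_div_pow_mul_succ hL).sub hq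
  rw [sub_zero] at hdiff
  exact hdiff.congr fun n => by ring

open Filter in
/-- if `C_2 > 0` and `L = lim (1/n^d) log C_n`, then the explicit lower
bounds `(1/n^d)(log C_{n+1} − q_d(n) log |Σ|)` also converge to `L`. -/
theorem lower_bounds_tendsto_entropy
    {A : Type*} [Fintype A] [Nonempty A]
    (d : ℕ) (hd : 1 ≤ d) (F : Fin d → Set (A × A))
    (hF : ∀ (i : Fin d) (a b : A), (a, b) ∈ F i ↔ (b, a) ∈ F i)
    (h2 : 0 < patCount d F 2) (L : ℝ)
    (hL : Tendsto (fun n : ℕ => (1 / (n : ℝ) ^ d) * Real.log (patCount d F n)) atTop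
      (nhds L)) :
    Tendsto (fun n : ℕ => (1 / (n : ℝ) ^ d) *
        (Real.log (patCount d F (n + 1)) - qReal d n * Real.log (Fintype.card A)))
      atTop (nhds L) :=
  lower_bounds_tendsto_entropy_general d F L hL
end
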